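/- arXiv:2501.08082 — 5 statements merged into one kernel-verified Lean document; each statement's English description precedes it below -/
import Mathlib

section
/- Let n ≥ 1 and let 𝓕 be a set of functions f : [n] → [n]. Let G(𝓕) be the HRG with single nonterminal S, single terminal a, type(S) = type(a) = [n], and productions P(𝓕) = {p(f) | f ∈ 𝓕} ∪ {S → a•}. Then L(G(𝓕)) = {F(a,h) | h ∈ ⟨𝓕⟩}, where ⟨𝓕⟩ is the least submonoid of the monoid of all functions [n] → [n] (under composition) containing 𝓕. -/
namespace HRGPaper

universe u

/-- A hypergraph over a `Finset ℕ`-typed alphabet `C` with typing function `tc`. -/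
structure Hypergraph (C : Type u) (tc : C → Finset ℕ) : Type (max u 1) where
  V : Type
  E : Type
  finV : Finite V
  finE : Finite E
  lab : E → C
  att : (e : E) → (σ : ℕ) → σ ∈ tc (lab e) → V
  extType : Finset ℕ
  ext : (σ : ℕ) → σ ∈ extType → V

variable {C : Type u} {tc : C → Finset ℕ}

/-- An isomorphism of hypergraphs. -/
structure HIso (H K : Hypergraph C tc) where
  vE : H.V ≃ K.V
  eE : H.E ≃ K.E
  lab_eq : ∀ e, K.lab (eE e) = H.lab e
  att_eq : ∀ (e : H.E) (σ : ℕ) (h : σ ∈ tc (H.lab e)) (h' : σ ∈ tc (K.lab (eE e))),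
    K.att (eE e) σ h' = vE (H.att e σ h)
  extType_eq : K.extType = H.extType
  ext_eq : ∀ (σ : ℕ) (h : σ ∈ H.extType) (h' : σ ∈ K.extType),
    K.ext σ h' = vE (H.ext σ h)

/-- Two hypergraphs are isomorphic. -/
def IsIso (H K : Hypergraph C tc) : Prop := Nonempty (HIso H K)

/-- The handle `c•` of a label `c`. -/
def handle (c : C) : Hypergraph C tc where
  V := {σ : ℕ // σ ∈ tc c}
  E := PUnit
  finV := inferInstance
  finE := inferInstance
  lab := fun _ => c
  att := fun _ σ h => ⟨σ, h⟩
  extType := tc c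
  ext := fun σ h => ⟨σ, h⟩

/-- The gluing relation used for hyperedge replacement: the attachment node of `e`
with selector `σ` gets identified with the external node of `K` with selector `σ`. -/
def glueRel (H : Hypergraph C tc) (e : H.E) (K : Hypergraph C tc) :
    (H.V ⊕ K.V) → (H.V ⊕ K.V) → Prop := fun x y =>
  ∃ (σ : ℕ) (h : σ ∈ tc (H.lab e)) (h' : σ ∈ K.extType),
    x = Sum.inl (H.att e σ h) ∧ y = Sum.inr (K.ext σ h')

/-- The replacement `H[e/K]` of the hyperedge `e` in `H` by the hypergraph `K`. -/
def replace (H : Hypergraph C tc) (e : H.E) (K : Hypergraph C tc) : Hypergraph C tc where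
  V := Quot (glueRel H e K)
  E := {e' : H.E // e' ≠ e} ⊕ K.E
  finV := by haveI := H.finV; haveI := K.finV; infer_instance
  finE := by haveI := H.finE; haveI := K.finE; infer_instance
  lab := Sum.elim (fun e' => H.lab e'.1) K.lab
  att := fun e' => Sum.rec (motive := fun e' => (σ : ℕ) →
      σ ∈ tc (Sum.elim (fun e'' : {e' : H.E // e' ≠ e} => H.lab e''.1) K.lab e') →
      Quot (glueRel H e K))
    (fun e₀ σ h => Quot.mk _ (Sum.inl (H.att e₀.1 σ h)))
    (fun eK σ h => Quot.mk _ (Sum.inr (K.att eK σ h))) e'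
  extType := H.extType
  ext := fun σ h => Quot.mk _ (Sum.inl (H.ext σ h))

/-- A hyperedge replacement grammar over the typed alphabet `C`; `isNT` singles out the
nonterminal labels, the remaining labels being terminal. -/
structure HRG (C : Type u) (tc : C → Finset ℕ) where
  isNT : C → Prop
  finC : Finite C
  P : Set (C × Hypergraph C tc)
  finP : P.Finite
  lhs_nt : ∀ p ∈ P, isNT p.1
  rhs_type : ∀ p ∈ P, p.2.extType = tc p.1
  S : C
  S_nt : isNT S

/-- One derivation step of an HRG: replace a hyperedge labeled by the left-hand side of a
production with the right-hand side of that production. -/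
def Step (Γ : HRG C tc) (H H' : Hypergraph C tc) : Prop :=
  ∃ (e : H.E) (p : C × Hypergraph C tc), p ∈ Γ.P ∧ H.lab e = p.1 ∧ H' = replace H e p.2

/-- The derivability relation `⇒*` of an HRG. -/
def Derives (Γ : HRG C tc) : Hypergraph C tc → Hypergraph C tc → Prop :=
  Relation.ReflTransGen (Step Γ)

/-- Derivability in exactly `k` steps. -/
inductive DerivesIn (Γ : HRG C tc) : ℕ → Hypergraph C tc → Hypergraph C tc → Prop
  | refl (H : Hypergraph C tc) : DerivesIn Γ 0 H H
  | tail {k H H' H''} : DerivesIn Γ k H H' → Step Γ H' H'' → DerivesIn Γ (k + 1) H H''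

/-- The language of an HRG: all hypergraphs with terminal labels only that are isomorphic to a
hypergraph derivable from the handle of the start symbol (i.e. the language is considered
up to isomorphism). -/
def Lang (Γ : HRG C tc) : Set (Hypergraph C tc) :=
  {H | (∀ e : H.E, ¬ Γ.isNT (H.lab e)) ∧ ∃ H', Derives Γ (handle Γ.S) H' ∧ IsIso H' H}

/-- The string graph of the word `w`. -/
def SG (w : List C) : Hypergraph C tc where
  V := Fin (w.length + 1)
  E := Fin w.length
  finV := inferInstance
  finE := inferInstance
  lab := fun i => w.get i
  att := fun i σ _ => if σ = 1 then i.castSucc else i.succ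
  extType := {1, 2}
  ext := fun σ _ => if σ = 1 then 0 else Fin.last w.length

/-- An HRG is string-generating if every hypergraph of its language is a string graph. -/
def IsStringGenerating (Γ : HRG C tc) : Prop :=
  ∀ H ∈ Lang Γ, ∃ w : List C, IsIso H (SG w)

/-- A hypergraph is repetition-free if its external map and all its attachment maps
are injective. -/
def RepFree (H : Hypergraph C tc) : Prop :=
  (∀ (σ₁ σ₂ : ℕ) (h₁ : σ₁ ∈ H.extType) (h₂ : σ₂ ∈ H.extType),
      H.ext σ₁ h₁ = H.ext σ₂ h₂ → σ₁ = σ₂) ∧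
  (∀ (e : H.E) (σ₁ σ₂ : ℕ) (h₁ : σ₁ ∈ tc (H.lab e)) (h₂ : σ₂ ∈ tc (H.lab e)),
      H.att e σ₁ h₁ = H.att e σ₂ h₂ → σ₁ = σ₂)

/-- An HRG is repetition-free if all right-hand sides of its productions are repetition-free. -/
def RepFreeGrammar (Γ : HRG C tc) : Prop := ∀ p ∈ Γ.P, RepFree p.2

/-- The size of a hypergraph: number of nodes plus number of hyperedges plus the total number
of attachment nodes of its hyperedges. -/
noncomputable def hgSize (D : Hypergraph C tc) : ℕ :=
  Nat.card D.V + Nat.card D.E + Nat.card ((e : D.E) × {σ : ℕ // σ ∈ tc (D.lab e)})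

/-- The size of a production. -/
noncomputable def prodSize (p : C × Hypergraph C tc) : ℕ :=
  (tc p.1).card + hgSize p.2

/-- The size of an HRG. -/
noncomputable def hrgSize (Γ : HRG C tc) : ℕ :=
  ∑ p ∈ Γ.finP.toFinset, prodSize p

/-- The hypergraph `F(X, f)`: nodes `[n] = {1,…,n}`, a single hyperedge labeled `X`
whose attachment node for selector `j` is `f j`, and all nodes external via `ext j = j`. -/
def Fgraph (X : C) (n : ℕ) (hX : tc X = Finset.Icc 1 n) (f : ℕ → ℕ)
    (hf : ∀ j ∈ Finset.Icc 1 n, f j ∈ Finset.Icc 1 n) : Hypergraph C tc where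
  V := {j : ℕ // j ∈ Finset.Icc 1 n}
  E := PUnit
  finV := inferInstanceAs (Finite ↥(Finset.Icc 1 n))
  finE := inferInstance
  lab := fun _ => X
  att := fun _ σ h => ⟨f σ, hf σ (hX ▸ h)⟩
  extType := Finset.Icc 1 n
  ext := fun σ h => ⟨σ, h⟩

/-- A node is external if it is in the range of the external map. -/
def IsExternal (H : Hypergraph C tc) (v : H.V) : Prop :=
  ∃ (σ : ℕ) (h : σ ∈ H.extType), H.ext σ h = v

/-- The HRG `G(𝓕)` over labels `Bool` (with `true` the nonterminal `S` and `false` the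
terminal `a`, both of type `[n]`), with productions `p(f)` for `f ∈ 𝓕` and `S → a•`. -/
def GF (n : ℕ) (F : Set (Function.End ℕ)) (hFfin : F.Finite)
    (hF : ∀ f ∈ F, ∀ j ∈ Finset.Icc 1 n, f j ∈ Finset.Icc 1 n) :
    HRG Bool (fun _ => Finset.Icc 1 n) where
  isNT := fun c => c = true
  finC := inferInstance
  P := ((fun f : {f : Function.End ℕ // ∀ j ∈ Finset.Icc 1 n, f j ∈ Finset.Icc 1 n} =>
          ((true : Bool), Fgraph true n rfl f.1 f.2)) '' {f | f.1 ∈ F})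
        ∪ {((true : Bool), handle false)}
  finP := by
    apply Set.Finite.union
    · apply Set.Finite.image
      exact hFfin.preimage (Set.injOn_of_injective Subtype.val_injective)
    · exact Set.finite_singleton _
  lhs_nt := by
    rintro p (⟨f, -, rfl⟩ | hp)
    · rfl
    · rw [Set.mem_singleton_iff] at hp; rw [hp]
  rhs_type := by
    rintro p (⟨f, -, rfl⟩ | hp)
    · rfl
    · rw [Set.mem_singleton_iff] at hp; rw [hp]; rfl
  S := true
  S_nt := rfl

/-! Every sentential form of `G(𝓕)` has exactly one hyperedge, so up to isomorphism it is
`F(X, h)` for its label `X` and the attachment map `h : [n] → [n]`. Replacing that hyperedge by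
`F(Y, g)` glues the external node `j` of `F(Y, g)` to `h j`, giving `F(Y, h ∘ g)`. Hence applying
`p(f)` to `F(S, h)` gives `F(S, h ∘ f)` and `S → a•` gives `F(a, h)`, so the sentential forms are
the `F(S, h)` and `F(a, h)` with `h ∈ ⟨𝓕⟩`, and the terminal ones are the `F(a, h)`. -/

namespace HIso

def refl (H : Hypergraph C tc) : HIso H H where
  vE := Equiv.refl _
  eE := Equiv.refl _
  lab_eq _ := rfl
  att_eq _ _ _ _ := rfl
  extType_eq := rfl
  ext_eq _ _ _ := rfl

def symm {H K : Hypergraph C tc} (φ : HIso H K) : HIso K H where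
  vE := φ.vE.symm
  eE := φ.eE.symm
  lab_eq e := by simpa using (φ.lab_eq (φ.eE.symm e)).symm
  att_eq e σ h h' := by
    have h'' : σ ∈ tc (K.lab (φ.eE (φ.eE.symm e))) := by rwa [φ.eE.apply_symm_apply]
    rw [Equiv.eq_symm_apply, ← φ.att_eq _ σ h' h'']
    congr 1; simp
  extType_eq := φ.extType_eq.symm
  ext_eq σ h h' := by rw [Equiv.eq_symm_apply, φ.ext_eq σ h' h]

def trans {H K L : Hypergraph C tc} (φ : HIso H K) (ψ : HIso K L) : HIso H L where
  vE := φ.vE.trans ψ.vE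
  eE := φ.eE.trans ψ.eE
  lab_eq e := (ψ.lab_eq (φ.eE e)).trans (φ.lab_eq e)
  att_eq e σ h h' := by
    have h'' : σ ∈ tc (K.lab (φ.eE e)) := by rwa [φ.lab_eq e]
    exact (ψ.att_eq _ σ h'' h').trans (congrArg ψ.vE (φ.att_eq e σ h h''))
  extType_eq := ψ.extType_eq.trans φ.extType_eq
  ext_eq σ h h' := by
    have h'' : σ ∈ K.extType := by rwa [φ.extType_eq]
    exact (ψ.ext_eq σ h'' h').trans (congrArg ψ.vE (φ.ext_eq σ h h''))

end HIso

section Fgraph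

variable {n : ℕ}

theorem handle_eq_Fgraph {C : Type u} (c : C) :
    (handle c : Hypergraph C fun _ => Finset.Icc 1 n) = Fgraph c n rfl id fun _ hj => hj :=
  rfl

def HIso.replaceFgraph {X Y : C} {hX : tc X = Finset.Icc 1 n} {hY : tc Y = Finset.Icc 1 n}
    {h g : ℕ → ℕ} {hh : ∀ j ∈ Finset.Icc 1 n, h j ∈ Finset.Icc 1 n}
    {hg : ∀ j ∈ Finset.Icc 1 n, g j ∈ Finset.Icc 1 n} {H : Hypergraph C tc}
    (φ : HIso H (Fgraph X n hX h hh)) (e : H.E) :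
    HIso (replace H e (Fgraph Y n hY g hg))
      (Fgraph Y n hY (h ∘ g) fun j hj => hh _ (hg j hj)) := by
  have edge_eq (e' : H.E) : e' = e := φ.eE.injective rfl
  have vE_att (σ : ℕ) (hσ : σ ∈ tc (H.lab e)) (hσ' : σ ∈ Finset.Icc 1 n) :
      φ.vE (H.att e σ hσ) = ⟨h σ, hh σ hσ'⟩ :=
    (φ.att_eq e σ hσ (hX ▸ hσ')).symm
  exact
  { vE :=
    { toFun := Quot.lift (Sum.elim φ.vE fun w => ⟨h w.1, hh w.1 w.2⟩) <| by
        rintro _ _ ⟨σ, hσ, hσ', rfl, rfl⟩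
        exact vE_att σ hσ hσ'
      invFun w := Quot.mk _ (Sum.inl (φ.vE.symm w))
      left_inv := by
        rintro ⟨v | w⟩
        · exact congrArg (Quot.mk _ ∘ Sum.inl) (φ.vE.symm_apply_apply v)
        · have hw : w.1 ∈ tc (H.lab e) := φ.lab_eq e ▸ hX.symm ▸ w.2
          refine (congrArg (Quot.mk _ ∘ Sum.inl) ?_).trans (Quot.sound ⟨w.1, hw, w.2, rfl, rfl⟩)
          exact (Equiv.symm_apply_eq _).mpr (vE_att w.1 hw w.2).symm
      right_inv := φ.vE.apply_symm_apply }
    eE :=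
    { toFun _ := PUnit.unit
      invFun _ := Sum.inr PUnit.unit
      left_inv := by
        rintro (⟨e', he'⟩ | ⟨⟩)
        · exact absurd (edge_eq e') he'
        · rfl
      right_inv _ := rfl }
    lab_eq := by
      rintro (⟨e', he'⟩ | _)
      · exact absurd (edge_eq e') he'
      · rfl
    att_eq := by
      rintro (⟨e', he'⟩ | _)
      · exact absurd (edge_eq e') he'
      · intros; rfl
    extType_eq := φ.extType_eq
    ext_eq := φ.ext_eq }

theorem HIso.step_replace {Γ : HRG C tc} {X : C} {hX : tc X = Finset.Icc 1 n}
    {h : ℕ → ℕ} {hh : ∀ j ∈ Finset.Icc 1 n, h j ∈ Finset.Icc 1 n} {H K : Hypergraph C tc}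
    (φ : HIso H (Fgraph X n hX h hh)) (hK : (X, K) ∈ Γ.P) :
    Step Γ H (replace H (φ.eE.symm PUnit.unit) K) :=
  ⟨_, _, hK, (φ.lab_eq _).symm, rfl⟩

end Fgraph

section Grammar

variable {n : ℕ} {F : Set (Function.End ℕ)} {hFfin : F.Finite}
  {hF : ∀ f ∈ F, ∀ j ∈ Finset.Icc 1 n, f j ∈ Finset.Icc 1 n}

theorem isIso_Fgraph_of_derives {H : Hypergraph Bool fun _ => Finset.Icc 1 n}
    (hd : Derives (GF n F hFfin hF) (handle true) H) :
    ∃ h ∈ Submonoid.closure F, ∃ hh : ∀ j ∈ Finset.Icc 1 n, h j ∈ Finset.Icc 1 n,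
      IsIso H (Fgraph true n rfl h hh) ∨ IsIso H (Fgraph false n rfl h hh) := by
  induction hd with
  | refl => exact ⟨1, one_mem _, fun _ hj => hj, Or.inl ⟨.refl _⟩⟩
  | tail _ hstep ih =>
    obtain ⟨h, hcl, hh, ⟨⟨φ⟩⟩ | ⟨⟨φ⟩⟩⟩ := ih <;> obtain ⟨e, p, hp, hlab, rfl⟩ := hstep
    · rcases hp with ⟨f, hf, rfl⟩ | rfl
      · exact ⟨h * f.1, mul_mem hcl (Submonoid.subset_closure hf), _,
          Or.inl ⟨φ.replaceFgraph (hg := f.2) e⟩⟩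
      · exact ⟨h, hcl, hh, Or.inr ⟨φ.replaceFgraph (hg := fun _ hj => hj) e⟩⟩
    · have hnt : p.1 = true := (GF n F hFfin hF).lhs_nt p hp
      exact absurd ((φ.lab_eq e).trans (hlab.trans hnt)) Bool.false_ne_true

theorem exists_derives_isIso_Fgraph {h : Function.End ℕ} (hcl : h ∈ Submonoid.closure F) :
    ∃ hh : ∀ j ∈ Finset.Icc 1 n, h j ∈ Finset.Icc 1 n, ∃ H,
      Derives (GF n F hFfin hF) (handle true) H ∧ IsIso H (Fgraph true n rfl h hh) := by
  induction hcl using Submonoid.closure_induction_right with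
  | one => exact ⟨fun _ hj => hj, _, .refl, ⟨.refl _⟩⟩
  | mul_right h _ f hf ih =>
    obtain ⟨hh, H, hd, ⟨φ⟩⟩ := ih
    exact ⟨_, _, hd.tail (φ.step_replace (Or.inl ⟨⟨f, hF f hf⟩, hf, rfl⟩)),
      ⟨φ.replaceFgraph _⟩⟩

end Grammar

theorem stmt_1_general (n : ℕ) (F : Set (Function.End ℕ)) (hFfin : F.Finite)
    (hF : ∀ f ∈ F, ∀ j ∈ Finset.Icc 1 n, f j ∈ Finset.Icc 1 n) :
    Lang (GF n F hFfin hF) =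
      {H | ∃ h ∈ Submonoid.closure F,
        ∃ hh : ∀ j ∈ Finset.Icc 1 n, h j ∈ Finset.Icc 1 n,
          IsIso H (Fgraph false n rfl h hh)} := by
  ext H
  constructor
  · rintro ⟨hterm, H', hd, ⟨ψ⟩⟩
    obtain ⟨h, hcl, hh, ⟨⟨φ⟩⟩ | ⟨⟨φ⟩⟩⟩ := isIso_Fgraph_of_derives hd
    · let e := φ.eE.symm PUnit.unit
      exact absurd ((ψ.lab_eq e).trans (φ.lab_eq e).symm) (hterm (ψ.eE e))
    · exact ⟨h, hcl, hh, ⟨ψ.symm.trans φ⟩⟩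
  · rintro ⟨h, hcl, hh, ⟨ψ⟩⟩
    refine ⟨fun e hnt => Bool.false_ne_true ((ψ.lab_eq e).trans hnt), ?_⟩
    obtain ⟨_, H', hd, ⟨φ⟩⟩ := exists_derives_isIso_Fgraph (hFfin := hFfin) (hF := hF) hcl
    refine ⟨_, hd.tail (φ.step_replace (Or.inr rfl)), ⟨?_⟩⟩
    rw [handle_eq_Fgraph]
    exact (φ.replaceFgraph _).trans ψ.symm

/-- `L(G(𝓕)) = {F(a, h) ∣ h ∈ ⟨𝓕⟩}`, where `⟨𝓕⟩` is the submonoid of the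
monoid of transformations generated by `𝓕`. -/
theorem stmt_1 (n : ℕ) (hn : 1 ≤ n) (F : Set (Function.End ℕ)) (hFfin : F.Finite)
    (hF : ∀ f ∈ F, ∀ j ∈ Finset.Icc 1 n, f j ∈ Finset.Icc 1 n) :
    Lang (GF n F hFfin hF) =
      {H | ∃ h ∈ Submonoid.closure F,
        ∃ hh : ∀ j ∈ Finset.Icc 1 n, h j ∈ Finset.Icc 1 n,
          IsIso H (Fgraph false n rfl h hh)} :=
  stmt_1_general n F hFfin hF

end HRGPaper
end

section
/- For every multiple context-free grammar (MCFG) G = (N, {a}, F, P, S) over the one-letter terminal alphabet {a} there exists a linear context-free rewriting system (LCFRS) G̃ over the terminal alphabet {a,b}, with nonterminal set N ∪ {S̃} and dimensions dim̃(A) = dim(A) + 1 for A ∈ N and dim̃(S̃) = 1, such that for every A ∈ N the set obtained from yield_{G̃}(A) by deleting the last component of every tuple equals yield_G(A). Consequently, ε ∈ L(G) if and only if some word of L(G̃) begins with b, i.e. L(G̃) ∩ b{a,b}* ≠ ∅. -/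
namespace HRGPaper

universe u

variable {C : Type u} {tc : C → Finset ℕ}

universe v w

/-- A rule of a multiple context-free grammar, given syntactically: the `i`-th component of the
output is a list of symbols, each being a terminal or a variable `x_{p,q}` referring to the
`q`-th component of the `p`-th argument nonterminal.  The field `linear` is the mcf-condition
that every variable occurs at most once in the output. -/
structure MCFGRule (N : Type v) (T : Type w) (dim : N → ℕ) where
  lhs : N
  args : List N
  out : Fin (dim lhs) → List (T ⊕ (Σ p : Fin args.length, Fin (dim (args.get p))))
  linear : ((List.ofFn out).flatten.filterMap Sum.getRight?).Nodup

/-- The list of (occurrences of) variables in the output of an MCFG rule. -/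
def MCFGRule.varList {N : Type v} {T : Type w} {dim : N → ℕ} (r : MCFGRule N T dim) :
    List (Σ p : Fin r.args.length, Fin (dim (r.args.get p))) :=
  (List.ofFn r.out).flatten.filterMap Sum.getRight?

/-- Evaluation of the mcf-function of an MCFG rule on a tuple of argument tuples. -/
def MCFGRule.eval {N : Type v} {T : Type w} {dim : N → ℕ} (r : MCFGRule N T dim)
    (τ : (p : Fin r.args.length) → Fin (dim (r.args.get p)) → List T) :
    Fin (dim r.lhs) → List T :=
  fun i => ((r.out i).map (Sum.elim (fun t => [t]) (fun v => τ v.1 v.2))).flatten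

/-- A multiple context-free grammar with nonterminals `N` (of dimensions `dim`) and
terminal alphabet `T`. -/
structure MCFG (N : Type v) (T : Type w) (dim : N → ℕ) where
  finN : Finite N
  finT : Finite T
  rules : Set (MCFGRule N T dim)
  finRules : rules.Finite
  start : N
  dim_start : dim start = 1

/-- `Yields G A t` means that the tuple `t` belongs to `yield_G(A)`. -/
inductive Yields {N : Type v} {T : Type w} {dim : N → ℕ} (G : MCFG N T dim) :
    (A : N) → (Fin (dim A) → List T) → Prop
  | step (r : MCFGRule N T dim) (hr : r ∈ G.rules)
      (τ : (p : Fin r.args.length) → Fin (dim (r.args.get p)) → List T)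
      (ih : ∀ p, Yields G (r.args.get p) (τ p)) :
      Yields G r.lhs (r.eval τ)

/-- The language of an MCFG. -/
def MCFG.lang {N : Type v} {T : Type w} {dim : N → ℕ} (G : MCFG N T dim) : Set (List T) :=
  {w | ∃ t : Fin (dim G.start) → List T, Yields G G.start t ∧ ∀ i, t i = w}

/-- An MCFG is an LCFRS if each of its rules uses every variable (hence, by `linear`,
exactly once): the information-lossless condition. -/
def MCFG.IsLCFRS {N : Type v} {T : Type w} {dim : N → ℕ} (G : MCFG N T dim) : Prop :=
  ∀ r ∈ G.rules, ∀ v : (Σ p : Fin r.args.length, Fin (dim (r.args.get p))), v ∈ r.varList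

/-- The size of an MCFG rule: the number of symbols in it. -/
def MCFGRule.size {N : Type v} {T : Type w} {dim : N → ℕ} (r : MCFGRule N T dim) : ℕ :=
  1 + r.args.length + ∑ i : Fin (dim r.lhs), (1 + (r.out i).length)

/-- The size of an MCFG: the total number of symbols in its rules. -/
noncomputable def MCFG.size {N : Type v} {T : Type w} {dim : N → ℕ} (G : MCFG N T dim) : ℕ :=
  ∑ r ∈ G.finRules.toFinset, r.size

/-! Give every nonterminal one extra component, and let each translated rule put into it, in
some order, every argument component that the original rule discards, in particular the extra
components of all its arguments. Every variable is then used exactly once, while the old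
components are computed as before, up to a renaming of the terminals. Deleting the extra
component therefore recovers exactly the old yields, by induction over derivations in either
grammar. The new start rule `S̃ → x₁₁ b x₁₂` produces a word beginning with `b` exactly when
its `S`-word is empty. -/

theorem comp_finCast_of_eq {α β : Type*} {d : α → ℕ} (P : (A : α) → (Fin (d A) → β) → Prop)
    {A B : α} (hAB : A = B) {t : Fin (d A) → β} (ht : P A t) :
    P B fun q => t (Fin.cast (congrArg d hAB).symm q) := by
  subst hAB
  exact ht

section Padding

variable {N T T' : Type*} {dim : N → ℕ}

def padDim (dim : N → ℕ) : Option N → ℕ := fun A => Option.elim A 1 (fun B => dim B + 1)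

@[simp] theorem padDim_some (A : N) : padDim dim (some A) = dim A + 1 := rfl

namespace MCFGRule

abbrev Var (r : MCFGRule N T dim) : Type :=
  Σ p : Fin r.args.length, Fin (dim (r.args.get p))

variable (r : MCFGRule N T dim) (f : T → T')

theorem get_args_map_some (p : Fin (r.args.map some).length) :
    (r.args.map some).get p = some (r.args.get (Fin.cast (List.length_map _) p)) := by
  simp

abbrev PadVar : Type :=
  Σ p : Fin (r.args.map some).length, Fin (padDim dim ((r.args.map some).get p))

def padVar (v : r.Var) : r.PadVar :=
  ⟨Fin.cast (List.length_map _).symm v.1,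
    Fin.cast (congrArg (padDim dim) (r.get_args_map_some _)).symm v.2.castSucc⟩

theorem padVar_injective : Function.Injective r.padVar := by
  rintro ⟨p, q⟩ ⟨p', q'⟩ hpq
  obtain rfl : p = p' := Fin.ext (congrArg (fun v => v.1.val) hpq)
  exact congrArg _ (Fin.ext (congrArg (fun v => v.2.val) hpq))

noncomputable def unusedVars : List r.PadVar :=
  Finset.univ.toList.filter (· ∉ r.varList.map r.padVar)

theorem mem_padVars (v : r.PadVar) : v ∈ r.varList.map r.padVar ++ r.unusedVars := by
  by_cases hv : v ∈ r.varList.map r.padVar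
  · exact List.mem_append_left _ hv
  · exact List.mem_append_right _ (by simpa [unusedVars] using hv)

noncomputable def padOut : Fin (dim r.lhs + 1) → List (T' ⊕ r.PadVar) :=
  Fin.lastCases (r.unusedVars.map Sum.inr) fun i => (r.out i).map (Sum.map f r.padVar)

theorem varList_padOut :
    (List.ofFn (r.padOut f)).flatten.filterMap Sum.getRight? =
      r.varList.map r.padVar ++ r.unusedVars := by
  rw [List.ofFn_succ']
  simp only [padOut, Fin.lastCases_castSucc, Fin.lastCases_last, List.concat_eq_append,
    List.flatten_append, List.flatten_cons, List.flatten_nil, List.append_nil,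
    List.filterMap_append, List.filterMap_flatten, List.map_ofFn, Function.comp_def,
    List.filterMap_map, Sum.getRight?_map, Sum.getRight?_inr, List.filterMap_some, varList,
    List.map_flatten, List.map_filterMap]

theorem nodup_varList_padOut :
    ((List.ofFn (r.padOut f)).flatten.filterMap Sum.getRight?).Nodup := by
  rw [varList_padOut]
  refine (r.linear.map r.padVar_injective).append ((Finset.nodup_toList _).filter _) ?_
  intro v hv hv'
  simp only [unusedVars, List.mem_filter, decide_eq_true_eq] at hv'
  exact hv'.2 hv

noncomputable def pad : MCFGRule (Option N) T' (padDim dim) where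
  lhs := some r.lhs
  args := r.args.map some
  out := r.padOut f
  linear := r.nodup_varList_padOut f

theorem mem_varList_pad (v : (r.pad f).Var) : v ∈ (r.pad f).varList := by
  rw [show (r.pad f).varList = r.varList.map r.padVar ++ r.unusedVars from r.varList_padOut f]
  exact r.mem_padVars v

theorem pad_eval_castSucc (τ : (p : Fin r.args.length) → Fin (dim (r.args.get p)) → List T)
    (τ' : (p : Fin (r.pad f).args.length) → Fin (padDim dim ((r.pad f).args.get p)) → List T')
    (hτ : ∀ v : r.Var, τ' (r.padVar v).1 (r.padVar v).2 = (τ v.1 v.2).map f)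
    (i : Fin (dim r.lhs)) :
    (r.pad f).eval τ' i.castSucc = (r.eval τ i).map f := by
  simp only [eval, pad, padOut, Fin.lastCases_castSucc, List.map_flatten, List.map_map]
  congr 1
  refine List.map_congr_left fun x _ => ?_
  cases x with
  | inl a => rfl
  | inr v => exact hτ v

end MCFGRule

def startRule (S : N) (hS : dim S = 1) (b : T') : MCFGRule (Option N) T' (padDim dim) where
  lhs := none
  args := [some S]
  out := fun _ => [.inr ⟨⟨0, Nat.one_pos⟩, ⟨0, Nat.succ_pos (dim S)⟩⟩, .inl b,
    .inr ⟨⟨0, Nat.one_pos⟩, Fin.last (dim S)⟩]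
  linear := by
    refine List.nodup_cons.mpr ⟨fun hmem => ?_, List.nodup_singleton _⟩
    have h0 : 0 = dim S := congrArg (fun v => v.2.val) (List.mem_singleton.mp hmem)
    omega

theorem mem_varList_startRule (S : N) (hS : dim S = 1) (b : T') (v : (startRule S hS b).Var) :
    v ∈ (startRule S hS b).varList := by
  obtain ⟨p, q⟩ := v
  obtain rfl : p = ⟨0, Nat.one_pos⟩ := Fin.ext (Nat.lt_one_iff.mp p.isLt)
  have hq : q.val < dim S + 1 := q.isLt
  obtain hq | hq : q.val = 0 ∨ q.val = dim S := by omega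
  · obtain rfl : q = ⟨0, Nat.succ_pos (dim S)⟩ := Fin.ext hq
    exact List.mem_cons_self
  · obtain rfl : q = Fin.last (dim S) := Fin.ext hq
    exact List.mem_cons_of_mem _ List.mem_cons_self

noncomputable def MCFG.pad [Finite T'] (G : MCFG N T dim) (f : T → T') (b : T') :
    MCFG (Option N) T' (padDim dim) where
  finN := have := G.finN; inferInstance
  finT := inferInstance
  rules := insert (startRule G.start G.dim_start b) ((·.pad f) '' G.rules)
  finRules := (G.finRules.image _).insert _
  start := none
  dim_start := rfl

namespace MCFG

variable (G : MCFG N T dim) (f : T → T') (b : T')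

def PadYield : (A : Option N) → (Fin (padDim dim A) → List T') → Prop
  | some A, t => ∃ s, Yields G A s ∧ ∀ i, t i.castSucc = (s i).map f
  | none, t => ∃ s, Yields G G.start s ∧
      ∃ v, t ⟨0, Nat.one_pos⟩ = (s ⟨0, G.dim_start ▸ Nat.one_pos⟩).map f ++ b :: v

variable [Finite T']

theorem isLCFRS_pad : (G.pad f b).IsLCFRS := by
  rintro r' (rfl | ⟨r, -, rfl⟩) v
  · exact mem_varList_startRule _ _ _ v
  · exact r.mem_varList_pad f v

theorem exists_yields_pad_of_yields {A : N} {s : Fin (dim A) → List T} (hs : Yields G A s) :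
    ∃ t : Fin (dim A + 1) → List T', Yields (G.pad f b) (some A) t ∧
      ∀ i, t i.castSucc = (s i).map f := by
  induction hs with
  | step r hr τ _ ih =>
    choose t ht hτ using ih
    refine ⟨(r.pad f).eval fun p q => t (Fin.cast (List.length_map _) p)
        (Fin.cast (congrArg (padDim dim) (r.get_args_map_some p)) q),
      ?_, r.pad_eval_castSucc f τ _ fun v => hτ v.1 v.2⟩
    exact Yields.step (r.pad f) (Set.mem_insert_of_mem _ (Set.mem_image_of_mem _ hr)) _ fun p =>
      comp_finCast_of_eq (Yields (G.pad f b)) (r.get_args_map_some p).symm (ht _)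

theorem padYield_of_yields_pad {A : Option N} {t : Fin (padDim dim A) → List T'}
    (ht : Yields (G.pad f b) A t) : G.PadYield f b A t := by
  induction ht with
  | step r' hr' τ _ ih =>
    rcases hr' with rfl | ⟨r, hr, rfl⟩
    · obtain ⟨s, hs, hτ⟩ := ih ⟨0, Nat.one_pos⟩
      refine ⟨s, hs, τ ⟨0, Nat.one_pos⟩ (Fin.last _), ?_⟩
      simp [MCFGRule.eval, startRule, ← hτ]
    · choose s hs hτ using fun p => comp_finCast_of_eq (G.PadYield f b)
        (r.get_args_map_some (Fin.cast (List.length_map _).symm p)) (ih _)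
      exact ⟨r.eval s, .step r hr s hs, r.pad_eval_castSucc f s τ fun v => hτ v.1 v.2⟩

theorem yields_pad_none_of_yields_pad_start {t : Fin (dim G.start + 1) → List T'}
    (ht : Yields (G.pad f b) (some G.start) t) :
    Yields (G.pad f b) none fun _ => t 0 ++ b :: t (Fin.last _) := by
  have hargs (p : Fin [some G.start].length) : some G.start = [some G.start].get p := by
    obtain rfl : p = ⟨0, Nat.one_pos⟩ := Fin.ext (Nat.lt_one_iff.mp p.isLt)
    rfl
  have hstep := Yields.step (startRule G.start G.dim_start b) (Set.mem_insert _ _) _ fun p =>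
    comp_finCast_of_eq (Yields (G.pad f b)) (hargs p) ht
  have heval : (startRule G.start G.dim_start b).eval
      (fun p q => t (Fin.cast (congrArg (padDim dim) (hargs p)).symm q)) =
        fun _ => t 0 ++ b :: t (Fin.last _) := by
    funext
    simp [MCFGRule.eval, startRule]
  exact heval ▸ hstep

theorem exists_yields_pad_iff {A : N} {t : Fin (dim A) → List T'} :
    (∃ t', Yields (G.pad f b) (some A) t' ∧ ∀ i, t' i.castSucc = t i) ↔
      ∃ s, Yields G A s ∧ ∀ i, t i = (s i).map f := by
  constructor
  · rintro ⟨t', ht', hproj⟩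
    obtain ⟨s, hs, hs'⟩ := G.padYield_of_yields_pad f b ht'
    exact ⟨s, hs, fun i => (hproj i).symm.trans (hs' i)⟩
  · rintro ⟨s, hs, hts⟩
    obtain ⟨t', ht', hproj⟩ := G.exists_yields_pad_of_yields f b hs
    exact ⟨t', ht', fun i => (hproj i).trans (hts i).symm⟩

theorem nil_mem_lang_iff (hb : ∀ x, f x ≠ b) :
    [] ∈ G.lang ↔ ∃ w ∈ (G.pad f b).lang, ∃ v, w = b :: v := by
  have h0 : 0 < dim G.start := G.dim_start ▸ Nat.one_pos
  constructor
  · rintro ⟨s, hs, hnil⟩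
    obtain ⟨t, ht, hproj⟩ := G.exists_yields_pad_of_yields f b hs
    have ht0 : t 0 = [] := by simpa [hnil] using hproj ⟨0, h0⟩
    refine ⟨b :: t (Fin.last _),
      ⟨_, G.yields_pad_none_of_yields_pad_start f b ht, fun _ => ?_⟩, _, rfl⟩
    rw [ht0, List.nil_append]
  · rintro ⟨w, ⟨t, ht, hw⟩, v, rfl⟩
    obtain ⟨s, hs, v', hv'⟩ := G.padYield_of_yields_pad f b ht
    have hbv : (s ⟨0, h0⟩).map f ++ b :: v' = b :: v := hv'.symm.trans (hw _)
    have hs0 : s ⟨0, h0⟩ = [] := by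
      cases hs0 : s ⟨0, h0⟩ with
      | nil => rfl
      | cons x _ => exact absurd (List.cons_eq_cons.mp (by simpa [hs0] using hbv)).1 (hb x)
    refine ⟨s, hs, fun i => ?_⟩
    rwa [show i = ⟨0, h0⟩ from Fin.ext (by have := G.dim_start; omega)]

end MCFG

end Padding

/-- Here `{a}` is `Unit`, `a = false`, `b = true` and `S̃ = none`. -/
theorem stmt_5 (N : Type) (dim : N → ℕ) (G : MCFG N Unit dim) :
    ∃ G' : MCFG (Option N) Bool (fun A => Option.elim A 1 (fun B => dim B + 1)),
      G'.IsLCFRS ∧ G'.start = none ∧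
      (∀ A : N,
        {t : Fin (dim A) → List Bool |
          ∃ t' : Fin (dim A + 1) → List Bool,
            Yields G' (some A) t' ∧ ∀ i : Fin (dim A), t' i.castSucc = t i}
        = {t : Fin (dim A) → List Bool |
            ∃ s : Fin (dim A) → List Unit,
              Yields G A s ∧ ∀ i : Fin (dim A), t i = (s i).map (fun _ => false)}) ∧
      ((([] : List Unit) ∈ G.lang) ↔ ∃ w ∈ G'.lang, ∃ v : List Bool, w = true :: v) :=
  ⟨G.pad (fun _ => false) true, G.isLCFRS_pad _ _, rfl,
    fun _ => Set.ext fun _ => G.exists_yields_pad_iff _ _,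
    G.nil_mem_lang_iff _ _ fun _ => Bool.false_ne_true⟩


end HRGPaper
end

section
/- Let Γ = (N, {a}, Σ, P, S) be a string-generating hyperedge replacement grammar over the one-letter terminal alphabet {a} with type(a) = {1,2}, and let G be the context-free (string) grammar with nonterminal set N, single terminal a, start symbol S, and, for each production (A → H) ∈ P, the rule A → lab_H(e_1)⋯lab_H(e_k), where e_1,…,e_k are the hyperedges of H listed in an arbitrary fixed order. Then for every n ≥ 0, SG(a^n) ∈ L(Γ) if and only if a^n ∈ L(G). -/
namespace HRGPaper

universe u

variable {C : Type u} {tc : C → Finset ℕ}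

/-- The symbol (for a context-free string grammar with terminal alphabet `{a} = Unit`)
corresponding to a label of an HRG: nonterminal labels stay nonterminal, terminal labels
become the terminal `a`. -/
noncomputable def toSymbol {C : Type} {tc : C → Finset ℕ} (Γ : HRG C tc) (c : C) :
    Symbol Unit C :=
  letI := Classical.propDecidable (Γ.isNT c)
  if Γ.isNT c then Symbol.nonterminal c else Symbol.terminal ()

/-! Over a one-letter alphabet the order of the hyperedges of a sentential form is immaterial:
both an HRG derivation and a derivation of the linearised grammar are governed by the multiset
of labels of the current form alone. Replacing an `X`-labelled hyperedge by `D` changes the label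
multiset exactly as the rule `X → lab(e₁)⋯lab(e_k)` changes the multiset of symbols of a word,
so derivations from `S•` and from `S` simulate each other with equal multisets. A terminal form
with multiset `aⁿ` is the word `aⁿ` on the string side and, the grammar being string-generating,
a string graph with `n` edges labelled `a`, i.e. `SG(aⁿ)`, on the hypergraph side. -/

theorem _root_.Relation.ReflTransGen.exists_of_simulation {α β : Type*} {r : α → α → Prop}
    {s : β → β → Prop} (sim : α → β → Prop)
    (hsim : ∀ a a' b, r a a' → sim a b → ∃ b', s b b' ∧ sim a' b')
    {a a' : α} {b : β} (hab : sim a b) (h : Relation.ReflTransGen r a a') :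
    ∃ b', Relation.ReflTransGen s b b' ∧ sim a' b' := by
  induction h with
  | refl => exact ⟨b, .refl, hab⟩
  | tail _ hstep ih =>
    obtain ⟨b₁, hb₁, hsim₁⟩ := ih
    obtain ⟨b₂, hb₂, hsim₂⟩ := hsim _ _ _ hstep hsim₁
    exact ⟨b₂, hb₁.tail hb₂, hsim₂⟩

theorem _root_.Multiset.coe_append_add_singleton {α : Type*} (u v w : List α) (x : α) :
    (↑(u ++ w ++ v) : Multiset α) + {x} = ↑(u ++ [x] ++ v) + ↑w := by
  simp only [← Multiset.coe_add, ← Multiset.coe_singleton]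
  abel

theorem _root_.List.eq_replicate_of_coe_eq {α : Type*} {l : List α} {n : ℕ} {a : α}
    (h : (l : Multiset α) = ↑(List.replicate n a)) : l = List.replicate n a :=
  List.perm_replicate.1 (Multiset.coe_eq_coe.1 h)

noncomputable def Hypergraph.labels (H : Hypergraph C tc) : Multiset C :=
  letI : Fintype H.E := @Fintype.ofFinite _ H.finE
  ∑ e : H.E, {H.lab e}

namespace Hypergraph

theorem labels_eq_sum (H : Hypergraph C tc) [Fintype H.E] :
    H.labels = ∑ e : H.E, {H.lab e} := by
  unfold labels
  convert rfl

theorem labels_eq_coe_map (H : Hypergraph C tc) {enum : List H.E} (hnd : enum.Nodup)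
    (hall : ∀ e, e ∈ enum) : H.labels = ↑(enum.map H.lab) := by
  rw [@labels_eq_sum _ _ H ⟨⟨enum, hnd⟩, hall⟩, Finset.sum_eq_multiset_sum]
  change ((enum : Multiset H.E).map ((fun c => ({c} : Multiset C)) ∘ H.lab)).sum = _
  rw [← Multiset.map_map, Multiset.sum_map_singleton, Multiset.map_coe]

theorem mem_labels {H : Hypergraph C tc} {c : C} : c ∈ H.labels ↔ ∃ e, H.lab e = c := by
  have := @Fintype.ofFinite _ H.finE
  simp [labels_eq_sum, Multiset.mem_sum, eq_comm]

theorem labels_handle (c : C) : (handle (tc := tc) c).labels = {c} := by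
  let : Fintype (handle (tc := tc) c).E := inferInstanceAs (Fintype PUnit)
  rw [labels_eq_sum]
  rfl

theorem labels_replace (H : Hypergraph C tc) (e : H.E) (K : Hypergraph C tc) :
    (replace H e K).labels + {H.lab e} = H.labels + K.labels := by
  classical
  have := @Fintype.ofFinite _ H.finE
  have := @Fintype.ofFinite _ K.finE
  rw [@labels_eq_sum _ _ (replace H e K) (inferInstance : Fintype ({e' // e' ≠ e} ⊕ K.E)),
    labels_eq_sum H, labels_eq_sum K, ← Finset.sum_erase_add _ _ (Finset.mem_univ e),
    Finset.sum_subtype (p := (· ≠ e)) _ (by simp)]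
  exact (congrArg (· + _) (Fintype.sum_sum_type _)).trans (add_right_comm _ _ _)

theorem labels_congr {H K : Hypergraph C tc} (h : IsIso H K) : H.labels = K.labels := by
  obtain ⟨φ⟩ := h
  have := @Fintype.ofFinite _ H.finE
  have := @Fintype.ofFinite _ K.finE
  rw [labels_eq_sum H, labels_eq_sum K]
  exact Fintype.sum_equiv φ.eE _ _ (fun e => by rw [φ.lab_eq])

theorem labels_SG (w : List C) : (SG (tc := tc) w).labels = w := by
  rw [@labels_eq_sum _ _ (SG w) (inferInstance : Fintype (Fin w.length))]
  change ∑ i : Fin w.length, ({w.get i} : Multiset C) = w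
  simpa [Finset.sum_eq_multiset_sum, Fin.univ_val_map] using
    Multiset.sum_map_singleton (w : Multiset C)

end Hypergraph

theorem IsIso.refl (H : Hypergraph C tc) : IsIso H H :=
  ⟨⟨.refl _, .refl _, fun _ => rfl, fun _ _ _ _ => rfl, rfl, fun _ _ _ => rfl⟩⟩

namespace HRG

variable {C : Type} {tc : C → Finset ℕ} (Γ : HRG C tc)

theorem toSymbol_eq_nonterminal_iff {c d : C} :
    toSymbol Γ c = .nonterminal d ↔ Γ.isNT c ∧ c = d := by
  unfold toSymbol
  split_ifs <;> simp [*]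

theorem toSymbol_eq_terminal_iff {c : C} : toSymbol Γ c = .terminal () ↔ ¬ Γ.isNT c := by
  unfold toSymbol
  split_ifs <;> simp [*]

/-- The sentential form of the linearised grammar that `H` stands for, up to the order of its
symbols. -/
noncomputable def symbols (H : Hypergraph C tc) : Multiset (Symbol Unit C) :=
  H.labels.map (toSymbol Γ)

theorem toSymbol_lab_mem_symbols (H : Hypergraph C tc) (e : H.E) :
    toSymbol Γ (H.lab e) ∈ Γ.symbols H :=
  Multiset.mem_map_of_mem _ (Hypergraph.mem_labels.2 ⟨e, rfl⟩)

theorem symbols_replace (H : Hypergraph C tc) (e : H.E) (K : Hypergraph C tc) :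
    Γ.symbols (replace H e K) + {toSymbol Γ (H.lab e)} = Γ.symbols H + Γ.symbols K := by
  simpa [symbols] using congrArg (Multiset.map (toSymbol Γ)) (H.labels_replace e K)

theorem symbols_congr {H K : Hypergraph C tc} (h : IsIso H K) : Γ.symbols H = Γ.symbols K := by
  rw [symbols, symbols, Hypergraph.labels_congr h]

theorem symbols_SG (w : List C) : Γ.symbols (SG (tc := tc) w) = ↑(w.map (toSymbol Γ)) := by
  rw [symbols, Hypergraph.labels_SG, Multiset.map_coe]

theorem symbols_handle_start :
    Γ.symbols (handle (tc := tc) Γ.S) = ↑([.nonterminal Γ.S] : List (Symbol Unit C)) := by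
  simp [symbols, Hypergraph.labels_handle, (toSymbol_eq_nonterminal_iff Γ).2 ⟨Γ.S_nt, rfl⟩]

theorem symbols_eq_coe_map (D : Hypergraph C tc) {enum : List D.E} (hnd : enum.Nodup)
    (hall : ∀ e, e ∈ enum) : Γ.symbols D = ↑(enum.map fun e => toSymbol Γ (D.lab e)) := by
  rw [symbols, D.labels_eq_coe_map hnd hall, Multiset.map_coe, List.map_map]
  rfl

theorem not_isNT_lab_of_symbols_eq_replicate {H : Hypergraph C tc} {n : ℕ}
    (h : Γ.symbols H = ↑(List.replicate n (Symbol.terminal () : Symbol Unit C))) (e : H.E) :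
    ¬ Γ.isNT (H.lab e) :=
  (Γ.toSymbol_eq_terminal_iff).1 <| List.eq_of_mem_replicate <|
    Multiset.mem_coe.1 (h ▸ Γ.toSymbol_lab_mem_symbols H e)

theorem eq_replicate_of_map_toSymbol_eq {a : C} (hterm : ∀ c, ¬ Γ.isNT c → c = a) {w : List C}
    {n : ℕ} (h : w.map (toSymbol Γ) = List.replicate n (.terminal ())) :
    w = List.replicate n a := by
  obtain ⟨hlen, hmem⟩ := List.eq_replicate_iff.1 h
  refine List.eq_replicate_iff.2 ⟨by simpa using hlen, fun c hc => hterm c ?_⟩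
  exact (Γ.toSymbol_eq_terminal_iff).1 (hmem _ (List.mem_map_of_mem hc))

variable (R : Finset (ContextFreeRule Unit C))

theorem exists_produces_of_step
    (hPR : ∀ p ∈ Γ.P, ∃ r ∈ R, r.input = p.1 ∧ Γ.symbols p.2 = r.output)
    {H H' : Hypergraph C tc} {l : List (Symbol Unit C)} (hstep : Step Γ H H')
    (hl : Γ.symbols H = l) :
    ∃ l', (ContextFreeGrammar.mk C Γ.S R).Produces l l' ∧ Γ.symbols H' = l' := by
  obtain ⟨e, p, hp, hlab, rfl⟩ := hstep
  obtain ⟨r, hr, hin, hout⟩ := hPR p hp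
  have hsym : toSymbol Γ (H.lab e) = .nonterminal r.input :=
    (toSymbol_eq_nonterminal_iff Γ).2 ⟨hlab ▸ Γ.lhs_nt p hp, hlab.trans hin.symm⟩
  have hmem : Symbol.nonterminal r.input ∈ l := by
    rw [← Multiset.mem_coe, ← hl, ← hsym]
    exact Γ.toSymbol_lab_mem_symbols H e
  obtain ⟨u, v, rfl⟩ := List.append_of_mem hmem
  refine ⟨u ++ r.output ++ v, ⟨r, hr, by simpa using r.rewrites_of_exists_parts u v⟩, ?_⟩
  apply add_right_cancel (b := {toSymbol Γ (H.lab e)})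
  rw [symbols_replace, hl, hout, hsym, Multiset.coe_append_add_singleton]
  simp

theorem exists_step_of_produces
    (hRP : ∀ r ∈ R, ∃ p ∈ Γ.P, r.input = p.1 ∧ Γ.symbols p.2 = r.output)
    {H : Hypergraph C tc} {l l' : List (Symbol Unit C)}
    (hprod : (ContextFreeGrammar.mk C Γ.S R).Produces l l') (hl : Γ.symbols H = l) :
    ∃ H', Step Γ H H' ∧ Γ.symbols H' = l' := by
  obtain ⟨r, hr, hrw⟩ := hprod
  obtain ⟨u, v, rfl, rfl⟩ := hrw.exists_parts
  obtain ⟨p, hp, hin, hout⟩ := hRP r hr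
  have hmem : Symbol.nonterminal r.input ∈ Γ.symbols H := by simp [hl]
  obtain ⟨c, hc, hsym⟩ := Multiset.mem_map.1 hmem
  obtain ⟨e, rfl⟩ := Hypergraph.mem_labels.1 hc
  obtain ⟨-, hlab⟩ := (toSymbol_eq_nonterminal_iff Γ).1 hsym
  refine ⟨replace H e p.2, ⟨e, p, hp, hlab.trans hin, rfl⟩, ?_⟩
  apply add_right_cancel (b := {toSymbol Γ (H.lab e)})
  rw [symbols_replace, hl, hout, hsym, Multiset.coe_append_add_singleton]

theorem exists_derives_of_derives
    (hPR : ∀ p ∈ Γ.P, ∃ r ∈ R, r.input = p.1 ∧ Γ.symbols p.2 = r.output)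
    {H : Hypergraph C tc} (h : Derives Γ (handle Γ.S) H) :
    ∃ l, (ContextFreeGrammar.mk C Γ.S R).Derives [.nonterminal Γ.S] l ∧ Γ.symbols H = l :=
  h.exists_of_simulation (fun H (l : List (Symbol Unit C)) => Γ.symbols H = l)
    (fun _ _ _ hstep hl => Γ.exists_produces_of_step R hPR hstep hl) Γ.symbols_handle_start

theorem exists_derives_of_cfg_derives
    (hRP : ∀ r ∈ R, ∃ p ∈ Γ.P, r.input = p.1 ∧ Γ.symbols p.2 = r.output)
    {l : List (Symbol Unit C)}
    (h : (ContextFreeGrammar.mk C Γ.S R).Derives [.nonterminal Γ.S] l) :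
    ∃ H, Derives Γ (handle Γ.S) H ∧ Γ.symbols H = l :=
  h.exists_of_simulation (fun (l : List (Symbol Unit C)) H => Γ.symbols H = l)
    (fun _ _ _ hprod hl => Γ.exists_step_of_produces R hRP hprod hl) Γ.symbols_handle_start

end HRG

theorem stmt_12_general (C : Type) (tc : C → Finset ℕ) (Γ : HRG C tc) (a : C)
    (haT : ¬ Γ.isNT a)
    (hterm : ∀ c : C, ¬ Γ.isNT c → c = a)
    (hsg : IsStringGenerating Γ)
    (R : Finset (ContextFreeRule Unit C))
    (hPR : ∀ p ∈ Γ.P, ∃ r ∈ R, r.input = p.1 ∧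
      ∃ enum : List p.2.E, enum.Nodup ∧ (∀ e : p.2.E, e ∈ enum) ∧
        r.output = enum.map (fun e => toSymbol Γ (p.2.lab e)))
    (hRP : ∀ r ∈ R, ∃ p ∈ Γ.P, r.input = p.1 ∧
      ∃ enum : List p.2.E, enum.Nodup ∧ (∀ e : p.2.E, e ∈ enum) ∧
        r.output = enum.map (fun e => toSymbol Γ (p.2.lab e))) :
    ∀ n : ℕ, SG (List.replicate n a) ∈ Lang Γ ↔
      List.replicate n () ∈ (ContextFreeGrammar.mk C Γ.S R).language := by
  have hPR' : ∀ p ∈ Γ.P, ∃ r ∈ R, r.input = p.1 ∧ Γ.symbols p.2 = r.output := by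
    intro p hp
    obtain ⟨r, hr, hin, enum, hnd, hall, hout⟩ := hPR p hp
    exact ⟨r, hr, hin, hout ▸ Γ.symbols_eq_coe_map p.2 hnd hall⟩
  have hRP' : ∀ r ∈ R, ∃ p ∈ Γ.P, r.input = p.1 ∧ Γ.symbols p.2 = r.output := by
    intro r hr
    obtain ⟨p, hp, hin, enum, hnd, hall, hout⟩ := hRP r hr
    exact ⟨p, hp, hin, hout ▸ Γ.symbols_eq_coe_map p.2 hnd hall⟩
  intro n
  have hword : (List.replicate n a).map (toSymbol Γ) = List.replicate n (.terminal ()) := by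
    rw [List.map_replicate, (Γ.toSymbol_eq_terminal_iff).2 haT]
  rw [ContextFreeGrammar.mem_language_iff, List.map_replicate]
  constructor
  · rintro ⟨-, H, hH, hiso⟩
    obtain ⟨l, hl, hsym⟩ := Γ.exists_derives_of_derives R hPR' hH
    obtain rfl : l = List.replicate n (.terminal ()) := List.eq_replicate_of_coe_eq <| by
      rw [← hsym, Γ.symbols_congr hiso, Γ.symbols_SG, hword]
    exact hl
  · intro hder
    obtain ⟨H, hH, hsym⟩ := Γ.exists_derives_of_cfg_derives R hRP' hder
    obtain ⟨w, hw⟩ :=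
      hsg H ⟨Γ.not_isNT_lab_of_symbols_eq_replicate hsym, H, hH, IsIso.refl H⟩
    obtain rfl : w = List.replicate n a := Γ.eq_replicate_of_map_toSymbol_eq hterm <|
      List.eq_replicate_of_coe_eq <| by rw [← Γ.symbols_SG, ← Γ.symbols_congr hw, hsym]
    exact ⟨fun e => by simpa [SG] using haT, H, hH, hw⟩

/-- Let `Γ` be a string-generating HRG over the one-letter terminal
alphabet `{a}` and let `G` be the context-free grammar obtained by linearisation: its
nonterminals are the labels of `Γ`, its start symbol is `S`, and for each production
`A → H` of `Γ` it has the rule `A → lab(e₁)⋯lab(e_k)` where `e₁,…,e_k` enumerate the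
hyperedges of `H` in an arbitrary fixed order.  Then for every `n`,
`SG(aⁿ) ∈ L(Γ)` iff `aⁿ ∈ L(G)`. -/
theorem stmt_12 (C : Type) (tc : C → Finset ℕ) (Γ : HRG C tc) (a : C)
    (hta : tc a = ({1, 2} : Finset ℕ)) (haT : ¬ Γ.isNT a)
    (hterm : ∀ c : C, ¬ Γ.isNT c → c = a)
    (hsg : IsStringGenerating Γ)
    (R : Finset (ContextFreeRule Unit C))
    (hPR : ∀ p ∈ Γ.P, ∃ r ∈ R, r.input = p.1 ∧
      ∃ enum : List p.2.E, enum.Nodup ∧ (∀ e : p.2.E, e ∈ enum) ∧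
        r.output = enum.map (fun e => toSymbol Γ (p.2.lab e)))
    (hRP : ∀ r ∈ R, ∃ p ∈ Γ.P, r.input = p.1 ∧
      ∃ enum : List p.2.E, enum.Nodup ∧ (∀ e : p.2.E, e ∈ enum) ∧
        r.output = enum.map (fun e => toSymbol Γ (p.2.lab e))) :
    ∀ n : ℕ, SG (List.replicate n a) ∈ Lang Γ ↔
      List.replicate n () ∈ (ContextFreeGrammar.mk C Γ.S R).language :=
  stmt_12_general C tc Γ a haT hterm hsg R hPR hRP

end HRGPaper
end

section
/- Let H and H′ be a-labeled hypergraphs with H ⇒_π H′, i.e. H′ is obtained from H by replacing one a-labeled edge by SG(aa) (a path of two a-labeled edges through a fresh node). Then H has a bad node or an undirected cycle if and only if H′ has a bad node or an undirected cycle; equivalently, H is good if and only if H′ is good. -/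
namespace HRGPaper

universe u

variable {C : Type u} {tc : C → Finset ℕ}

/-- The in-degree of a node of an (`a`-labeled) hypergraph: the number of edges whose
attachment node with selector `2` is `v`. -/
noncomputable def inDeg {C : Type u} {tc : C → Finset ℕ} (H : Hypergraph C tc) (v : H.V) : ℕ :=
  Nat.card {e : H.E // ∃ h : 2 ∈ tc (H.lab e), H.att e 2 h = v}

/-- The out-degree of a node of an (`a`-labeled) hypergraph: the number of edges whose
attachment node with selector `1` is `v`. -/
noncomputable def outDeg {C : Type u} {tc : C → Finset ℕ} (H : Hypergraph C tc) (v : H.V) : ℕ :=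
  Nat.card {e : H.E // ∃ h : 1 ∈ tc (H.lab e), H.att e 1 h = v}

/-- A node is bad if it is not external and its in-degree or out-degree differs from `1`. -/
def BadNode {C : Type u} {tc : C → Finset ℕ} (H : Hypergraph C tc) (v : H.V) : Prop :=
  ¬ IsExternal H v ∧ (inDeg H v ≠ 1 ∨ outDeg H v ≠ 1)

/-- `H` has an undirected cycle `v₁, e₁, …, v_l, e_l`: the `vᵢ` are distinct nodes, the `eᵢ`
are distinct edges, and the unordered pair of attachment nodes of `eᵢ` is `{vᵢ, vᵢ₊₁}`
(indices cyclically). -/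
def HasUndirectedCycle {C : Type u} {tc : C → Finset ℕ} (H : Hypergraph C tc) : Prop :=
  ∃ (l : ℕ) (hl : 0 < l) (v : Fin l → H.V) (e : Fin l → H.E),
    Function.Injective v ∧ Function.Injective e ∧
    ∀ i : Fin l, ∃ (h₁ : 1 ∈ tc (H.lab (e i))) (h₂ : 2 ∈ tc (H.lab (e i))),
      ({H.att (e i) 1 h₁, H.att (e i) 2 h₂} : Set H.V)
        = {v i, v ⟨(i.1 + 1) % l, Nat.mod_lt _ hl⟩}

/-- A hypergraph is bad if it has a bad node or an undirected cycle. -/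
def Bad {C : Type u} {tc : C → Finset ℕ} (H : Hypergraph C tc) : Prop :=
  (∃ v : H.V, BadNode H v) ∨ HasUndirectedCycle H

/-- A hypergraph is good if it is not bad. -/
def Good {C : Type u} {tc : C → Finset ℕ} (H : Hypergraph C tc) : Prop := ¬ Bad H

/-!
`H[e/SG(aa)]` is `H` with the edge `e` subdivided by one new node, the middle node of `SG(aa)`.
The two halves of `e` take over the source and the target of `e`, so every old node keeps its
externality and its in- and out-degree, while the middle node is internal with in- and
out-degree `1`; hence bad nodes correspond. Cycles avoiding `e` are the cycles avoiding the middle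
node. A cycle through `e`, rotated so that `e` is its last edge, is a path between the ends of `e`
closed by `e`; closing it instead through the middle node along both halves gives a cycle through
the middle node, and every such cycle arises in this way, as the two halves are the only edges at
the middle node.
-/

open Function

theorem card_fiber_eq_of_semiconj {V E V' E' : Type*} {f : E → E'} (hf : Injective f)
    {ι : V → V'} (hι : Injective ι) {t : E → V} {t' : E' → V'} (ht : ∀ x, t' (f x) = ι (t x))
    (hrange : ∀ x' v, t' x' = ι v → x' ∈ Set.range f) (v : V) :
    Nat.card {x // t x = v} = Nat.card {x' // t' x' = ι v} :=
  Nat.card_congr <| Equiv.ofBijective (fun x => ⟨f x, by rw [ht, x.2]⟩)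
    ⟨fun _ _ h => Subtype.ext (hf (congrArg Subtype.val h)), fun ⟨x', hx'⟩ =>
      let ⟨x, hx⟩ := hrange x' v hx'
      ⟨⟨x, hι (by rw [← ht, hx, hx'])⟩, Subtype.ext hx⟩⟩

-- A multigraph is given by its incidence map `ends : E → Sym2 V`.

section Multigraph

variable {V E F V' E' : Type*} {ends : E → Sym2 V} {n : ℕ}

def IsPath (ends : E → Sym2 V) (v : Fin (n + 1) → V) (x : Fin n → E) : Prop :=
  Injective v ∧ Injective x ∧ ∀ i, ends (x i) = s(v i.castSucc, v i.succ)

def IsCycle (ends : E → Sym2 V) (v : Fin (n + 1) → V) (x : Fin (n + 1) → E) : Prop :=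
  Injective v ∧ Injective x ∧ ∀ i, ends (x i) = s(v i, v (i + 1))

def HasCycle (ends : E → Sym2 V) : Prop :=
  ∃ (n : ℕ) (v : Fin (n + 1) → V) (x : Fin (n + 1) → E), IsCycle ends v x

theorem isPath_snoc_iff {v : Fin (n + 1) → V} {z : V} {x : Fin n → E} {y : E} :
    IsPath ends (Fin.snoc v z : Fin (n + 2) → V) (Fin.snoc x y) ↔
      IsPath ends v x ∧ z ∉ Set.range v ∧ y ∉ Set.range x ∧ ends y = s(v (Fin.last n), z) := by
  simp only [IsPath, Fin.snoc_injective_iff, Fin.forall_fin_succ', Fin.snoc_castSucc,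
    Fin.succ_castSucc, Fin.succ_last, Fin.snoc_last]
  tauto

theorem isCycle_snoc_iff {v : Fin (n + 1) → V} {x : Fin n → E} {y : E} :
    IsCycle ends v (Fin.snoc x y) ↔
      IsPath ends v x ∧ y ∉ Set.range x ∧ ends y = s(v (Fin.last n), v 0) := by
  simp only [IsCycle, IsPath, Fin.snoc_injective_iff, Fin.forall_fin_succ', Fin.snoc_castSucc,
    Fin.coeSucc_eq_succ, Fin.snoc_last, Fin.last_add_one]
  tauto

theorem isCycle_snoc_snoc_iff {v : Fin (n + 1) → V} {z : V} {x : Fin n → E} {y₁ y₂ : E} :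
    IsCycle ends (Fin.snoc v z) (Fin.snoc (Fin.snoc x y₁) y₂) ↔
      IsPath ends v x ∧ z ∉ Set.range v ∧ y₁ ∉ Set.range x ∧ y₂ ∉ insert y₁ (Set.range x) ∧
        ends y₁ = s(v (Fin.last n), z) ∧ ends y₂ = s(z, v 0) := by
  rw [isCycle_snoc_iff, isPath_snoc_iff, Fin.range_snoc, Fin.snoc_last, ← Fin.castSucc_zero,
    Fin.snoc_castSucc]
  tauto

theorem IsCycle.rotate {v : Fin (n + 1) → V} {x : Fin (n + 1) → E} (hc : IsCycle ends v x)
    (k : Fin (n + 1)) : IsCycle ends (fun i => v (i + k)) (fun i => x (i + k)) :=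
  ⟨hc.1.comp (add_left_injective k), hc.2.1.comp (add_left_injective k),
    fun i => by simpa only [add_right_comm] using hc.2.2 (i + k)⟩

theorem IsCycle.exists_rotate_last {v : Fin (n + 1) → V} {x : Fin (n + 1) → E}
    (hc : IsCycle ends v x) (i : Fin (n + 1)) :
    ∃ v' x', IsCycle ends v' x' ∧ v' (Fin.last n) = v i ∧ x' (Fin.last n) = x i :=
  ⟨_, _, hc.rotate (i - Fin.last n), by simp, by simp⟩

section Comap

variable {ends' : E' → Sym2 V'} {f : V → V'} {φ : F → E} {g : F → E'}

theorem ends_comp_eq_iff (hf : Injective f) (hends : ∀ y, ends' (g y) = (ends (φ y)).map f)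
    (y : F) (u w : V) : ends' (g y) = s(f u, f w) ↔ ends (φ y) = s(u, w) := by
  rw [hends, ← Sym2.map_mk, (Sym2.map.injective hf).eq_iff]

theorem isPath_comp_iff (hf : Injective f) (hφ : Injective φ) (hg : Injective g)
    (hends : ∀ y, ends' (g y) = (ends (φ y)).map f) {v : Fin (n + 1) → V} {y : Fin n → F} :
    IsPath ends' (f ∘ v) (g ∘ y) ↔ IsPath ends v (φ ∘ y) := by
  simp only [IsPath, hf.of_comp_iff, hφ.of_comp_iff, hg.of_comp_iff, comp_apply,
    ends_comp_eq_iff hf hends]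

theorem isCycle_comp_iff (hf : Injective f) (hφ : Injective φ) (hg : Injective g)
    (hends : ∀ y, ends' (g y) = (ends (φ y)).map f) {v : Fin (n + 1) → V}
    {y : Fin (n + 1) → F} :
    IsCycle ends' (f ∘ v) (g ∘ y) ↔ IsCycle ends v (φ ∘ y) := by
  simp only [IsCycle, hf.of_comp_iff, hφ.of_comp_iff, hg.of_comp_iff, comp_apply,
    ends_comp_eq_iff hf hends]

end Comap

end Multigraph

def IsBinary (H : Hypergraph C tc) : Prop := ∀ x, 1 ∈ tc (H.lab x) ∧ 2 ∈ tc (H.lab x)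

namespace IsBinary

variable {H : Hypergraph C tc} (hH : IsBinary H)

def src (x : H.E) : H.V := H.att x 1 (hH x).1

def tgt (x : H.E) : H.V := H.att x 2 (hH x).2

def ends (x : H.E) : Sym2 H.V := s(hH.src x, hH.tgt x)

theorem inDeg_eq (v : H.V) : inDeg H v = Nat.card {x // hH.tgt x = v} :=
  Nat.card_congr <| Equiv.subtypeEquivRight fun x => ⟨fun ⟨_, h⟩ => h, fun h => ⟨(hH x).2, h⟩⟩

theorem outDeg_eq (v : H.V) : outDeg H v = Nat.card {x // hH.src x = v} :=
  Nat.card_congr <| Equiv.subtypeEquivRight fun x => ⟨fun ⟨_, h⟩ => h, fun h => ⟨(hH x).1, h⟩⟩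

theorem exists_pair_eq_iff (x : H.E) (u w : H.V) :
    (∃ (h₁ : 1 ∈ tc (H.lab x)) (h₂ : 2 ∈ tc (H.lab x)),
      ({H.att x 1 h₁, H.att x 2 h₂} : Set H.V) = {u, w}) ↔ hH.ends x = s(u, w) := by
  rw [ends, Sym2.eq_iff, ← Set.pair_eq_pair_iff]
  exact ⟨fun ⟨_, _, h⟩ => h, fun h => ⟨(hH x).1, (hH x).2, h⟩⟩

theorem hasUndirectedCycle_iff : HasUndirectedCycle H ↔ HasCycle hH.ends := by
  have hsucc : ∀ {n} (i : Fin (n + 1)) (h), (⟨(i.1 + 1) % (n + 1), h⟩ : Fin (n + 1)) = i + 1 :=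
    fun i _ => Fin.ext (by simp [Fin.val_add])
  constructor
  · rintro ⟨_ | n, hl, v, x, hv, hx, hc⟩
    · exact absurd hl (lt_irrefl 0)
    · exact ⟨n, v, x, hv, hx, fun i => by
        simpa only [hsucc, hH.exists_pair_eq_iff] using hc i⟩
  · rintro ⟨n, v, x, hv, hx, hc⟩
    exact ⟨n + 1, n.succ_pos, v, x, hv, hx, fun i => by
      simpa only [hsucc, hH.exists_pair_eq_iff] using hc i⟩

end IsBinary

section Subdivision

variable {H : Hypergraph C tc} (e : H.E) (a : C)

def oldNode (v : H.V) : (replace H e (SG [a, a])).V := Quot.mk _ (.inl v)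

def midNode : (replace H e (SG [a, a])).V := Quot.mk _ (.inr (1 : Fin 3))

theorem oldNode_src (hH : IsBinary H) :
    oldNode e a (hH.src e) = Quot.mk _ (.inr (0 : Fin 3)) :=
  Quot.sound ⟨1, _, by simp [SG], rfl, rfl⟩

theorem oldNode_tgt (hH : IsBinary H) :
    oldNode e a (hH.tgt e) = Quot.mk _ (.inr (2 : Fin 3)) :=
  Quot.sound ⟨2, _, by simp [SG], rfl, rfl⟩

def nodeEquiv (hH : IsBinary H) : (replace H e (SG [a, a])).V ≃ Option H.V where
  toFun := Quot.lift
    (Sum.elim some fun i : Fin 3 =>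
      if i = 0 then some (hH.src e) else if i = 1 then none else some (hH.tgt e))
    (by
      rintro _ _ ⟨σ, h, hσ, rfl, rfl⟩
      rcases Finset.mem_insert.1 hσ with rfl | hσ
      · rfl
      · obtain rfl := Finset.mem_singleton.1 hσ
        rfl)
  invFun o := o.elim (midNode e a) (oldNode e a)
  left_inv := by
    rintro ⟨v | i⟩
    · rfl
    · change Fin 3 at i
      fin_cases i
      exacts [oldNode_src e a hH, rfl, oldNode_tgt e a hH]
  right_inv o := by cases o <;> rfl

theorem oldNode_injective (hH : IsBinary H) : Injective (oldNode e a) :=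
  fun _ _ h => Option.some_injective _ (congrArg (nodeEquiv e a hH) h)

theorem oldNode_ne_midNode (hH : IsBinary H) (v : H.V) : oldNode e a v ≠ midNode e a :=
  fun h => Option.some_ne_none v (congrArg (nodeEquiv e a hH) h)

theorem exists_oldNode_or_eq_midNode (hH : IsBinary H) (x : (replace H e (SG [a, a])).V) :
    (∃ v, oldNode e a v = x) ∨ x = midNode e a := by
  obtain ⟨o, rfl⟩ := (nodeEquiv e a hH).symm.surjective x
  cases o with
  | none => exact .inr rfl
  | some v => exact .inl ⟨v, rfl⟩

theorem IsBinary.replace_SG (hH : IsBinary H) (ha : 1 ∈ tc a ∧ 2 ∈ tc a) :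
    IsBinary (replace H e (SG [a, a]))
  | .inl y => hH y.1
  | .inr i => by
    change Fin 2 at i
    fin_cases i <;> exact ha

variable {e a}

theorem src_inr_zero (hH : IsBinary H) (hH' : IsBinary (replace H e (SG [a, a]))) :
    hH'.src (.inr (0 : Fin 2)) = oldNode e a (hH.src e) :=
  (oldNode_src e a hH).symm

theorem tgt_inr_zero (hH' : IsBinary (replace H e (SG [a, a]))) :
    hH'.tgt (.inr (0 : Fin 2)) = midNode e a :=
  rfl

theorem src_inr_one (hH' : IsBinary (replace H e (SG [a, a]))) :
    hH'.src (.inr (1 : Fin 2)) = midNode e a :=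
  rfl

theorem tgt_inr_one (hH : IsBinary H) (hH' : IsBinary (replace H e (SG [a, a]))) :
    hH'.tgt (.inr (1 : Fin 2)) = oldNode e a (hH.tgt e) :=
  (oldNode_tgt e a hH).symm

theorem ends_inr_zero (hH : IsBinary H) (hH' : IsBinary (replace H e (SG [a, a]))) :
    hH'.ends (.inr (0 : Fin 2)) = s(oldNode e a (hH.src e), midNode e a) :=
  congrArg₂ (s(·, ·)) (src_inr_zero hH hH') (tgt_inr_zero hH')

theorem ends_inr_one (hH : IsBinary H) (hH' : IsBinary (replace H e (SG [a, a]))) :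
    hH'.ends (.inr (1 : Fin 2)) = s(midNode e a, oldNode e a (hH.tgt e)) :=
  congrArg₂ (s(·, ·)) (src_inr_one hH') (tgt_inr_one hH hH')

open Classical in
variable (e a) in
/-- Sends `e` to its half `j`: for `j = 1` this preserves targets, for `j = 0` sources. -/
noncomputable def liftEdge (j : Fin 2) (y : H.E) : (replace H e (SG [a, a])).E :=
  if h : y = e then .inr j else .inl ⟨y, h⟩

theorem liftEdge_self (j : Fin 2) : liftEdge e a j e = .inr j := dif_pos rfl

theorem liftEdge_of_ne (j : Fin 2) {y : H.E} (hy : y ≠ e) : liftEdge e a j y = .inl ⟨y, hy⟩ :=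
  dif_neg hy

theorem liftEdge_injective (j : Fin 2) : Injective (liftEdge e a j) := by
  intro y z h
  by_cases hy : y = e <;> by_cases hz : z = e
  · exact hy.trans hz.symm
  · rw [hy, liftEdge_self, liftEdge_of_ne j hz] at h; cases h
  · rw [hz, liftEdge_self, liftEdge_of_ne j hy] at h; cases h
  · rw [liftEdge_of_ne j hy, liftEdge_of_ne j hz] at h
    exact congrArg Subtype.val (Sum.inl_injective h)

theorem mem_range_liftEdge_or (j : Fin 2) (x : (replace H e (SG [a, a])).E) :
    x ∈ Set.range (liftEdge e a j) ∨ ∃ i, i ≠ j ∧ x = .inr i := by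
  rcases x with y | i
  · exact .inl ⟨y.1, liftEdge_of_ne j y.2⟩
  · by_cases hi : i = j
    · exact .inl ⟨e, hi ▸ liftEdge_self i⟩
    · exact .inr ⟨i, hi, rfl⟩

theorem inDeg_oldNode (hH : IsBinary H) (hH' : IsBinary (replace H e (SG [a, a]))) (v : H.V) :
    inDeg (replace H e (SG [a, a])) (oldNode e a v) = inDeg H v := by
  rw [hH.inDeg_eq, hH'.inDeg_eq]
  refine (card_fiber_eq_of_semiconj (liftEdge_injective 1) (oldNode_injective e a hH)
    (fun y => ?_) (fun x w hx => ?_) v).symm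
  · rcases eq_or_ne y e with rfl | hy
    · rw [liftEdge_self, tgt_inr_one hH hH']
    · rw [liftEdge_of_ne 1 hy]; rfl
  · refine (mem_range_liftEdge_or 1 x).resolve_right ?_
    rintro ⟨i, hi, rfl⟩
    obtain rfl : i = 0 := by omega
    exact oldNode_ne_midNode e a hH w hx.symm

theorem outDeg_oldNode (hH : IsBinary H) (hH' : IsBinary (replace H e (SG [a, a]))) (v : H.V) :
    outDeg (replace H e (SG [a, a])) (oldNode e a v) = outDeg H v := by
  rw [hH.outDeg_eq, hH'.outDeg_eq]
  refine (card_fiber_eq_of_semiconj (liftEdge_injective 0) (oldNode_injective e a hH)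
    (fun y => ?_) (fun x w hx => ?_) v).symm
  · rcases eq_or_ne y e with rfl | hy
    · rw [liftEdge_self, src_inr_zero hH hH']
    · rw [liftEdge_of_ne 0 hy]; rfl
  · refine (mem_range_liftEdge_or 0 x).resolve_right ?_
    rintro ⟨i, hi, rfl⟩
    obtain rfl : i = 1 := by omega
    exact oldNode_ne_midNode e a hH w hx.symm

theorem inDeg_midNode (hH : IsBinary H) (hH' : IsBinary (replace H e (SG [a, a]))) :
    inDeg (replace H e (SG [a, a])) (midNode e a) = 1 := by
  rw [hH'.inDeg_eq, Nat.card_eq_one_iff_exists]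
  refine ⟨⟨.inr (0 : Fin 2), tgt_inr_zero hH'⟩, fun ⟨x, hx⟩ => Subtype.ext ?_⟩
  rcases x with y | i
  · exact absurd hx (oldNode_ne_midNode e a hH _)
  · change Fin 2 at i
    fin_cases i
    · rfl
    · exact absurd (tgt_inr_one hH hH' ▸ hx) (oldNode_ne_midNode e a hH _)

theorem outDeg_midNode (hH : IsBinary H) (hH' : IsBinary (replace H e (SG [a, a]))) :
    outDeg (replace H e (SG [a, a])) (midNode e a) = 1 := by
  rw [hH'.outDeg_eq, Nat.card_eq_one_iff_exists]
  refine ⟨⟨.inr (1 : Fin 2), src_inr_one hH'⟩, fun ⟨x, hx⟩ => Subtype.ext ?_⟩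
  rcases x with y | i
  · exact absurd hx (oldNode_ne_midNode e a hH _)
  · change Fin 2 at i
    fin_cases i
    · exact absurd (src_inr_zero hH hH' ▸ hx) (oldNode_ne_midNode e a hH _)
    · rfl

theorem isExternal_oldNode (hH : IsBinary H) (v : H.V) :
    IsExternal (replace H e (SG [a, a])) (oldNode e a v) ↔ IsExternal H v :=
  exists₂_congr fun _ _ => (oldNode_injective e a hH).eq_iff

theorem badNode_oldNode (hH : IsBinary H) (hH' : IsBinary (replace H e (SG [a, a])))
    (v : H.V) : BadNode (replace H e (SG [a, a])) (oldNode e a v) ↔ BadNode H v := by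
  rw [BadNode, BadNode, isExternal_oldNode hH, inDeg_oldNode hH hH', outDeg_oldNode hH hH']

theorem not_badNode_midNode (hH : IsBinary H) (hH' : IsBinary (replace H e (SG [a, a]))) :
    ¬ BadNode (replace H e (SG [a, a])) (midNode e a) := by
  simp [BadNode, inDeg_midNode hH hH', outDeg_midNode hH hH']

theorem exists_badNode_iff_replace (hH : IsBinary H)
    (hH' : IsBinary (replace H e (SG [a, a]))) :
    (∃ v, BadNode H v) ↔ ∃ x, BadNode (replace H e (SG [a, a])) x := by
  refine ⟨fun ⟨v, hv⟩ => ⟨_, (badNode_oldNode hH hH' v).2 hv⟩, fun ⟨x, hx⟩ => ?_⟩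
  rcases exists_oldNode_or_eq_midNode e a hH x with ⟨v, rfl⟩ | rfl
  · exact ⟨v, (badNode_oldNode hH hH' v).1 hx⟩
  · exact absurd hx (not_badNode_midNode hH hH')

theorem midNode_not_mem_map (hH : IsBinary H) (z : Sym2 H.V) :
    midNode e a ∉ z.map (oldNode e a) := by
  rw [Sym2.mem_map]
  rintro ⟨v, -, hv⟩
  exact oldNode_ne_midNode e a hH v hv

theorem exists_eq_inr_of_midNode_mem (hH : IsBinary H)
    (hH' : IsBinary (replace H e (SG [a, a]))) {x : (replace H e (SG [a, a])).E}
    (hx : midNode e a ∈ hH'.ends x) : ∃ i, x = .inr i := by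
  rcases x with y | i
  · exact absurd hx (midNode_not_mem_map hH (hH.ends y.1))
  · exact ⟨i, rfl⟩

theorem exists_comp_inl (hH : IsBinary H) (hH' : IsBinary (replace H e (SG [a, a]))) {m : ℕ}
    {x : Fin m → (replace H e (SG [a, a])).E} (hx : ∀ k, midNode e a ∉ hH'.ends (x k)) :
    ∃ y, Sum.inl ∘ y = x := by
  have hinl : ∀ k, ∃ y, Sum.inl y = x k := fun k => by
    rcases hxk : x k with y | i
    · exact ⟨y, rfl⟩
    · change Fin 2 at i
      have := hx k
      fin_cases i <;> simp_all [ends_inr_zero hH hH', ends_inr_one hH hH']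
  choose y hy using hinl
  exact ⟨y, funext hy⟩

theorem exists_comp_oldNode (hH : IsBinary H) {m : ℕ}
    {u : Fin m → (replace H e (SG [a, a])).V} (hu : midNode e a ∉ Set.range u) :
    ∃ w, oldNode e a ∘ w = u := by
  choose w hw using fun k =>
    (exists_oldNode_or_eq_midNode e a hH (u k)).resolve_right fun h => hu ⟨k, h⟩
  exact ⟨w, funext hw⟩

theorem ends_ne_midNode_midNode (hH : IsBinary H) (hH' : IsBinary (replace H e (SG [a, a])))
    (x : (replace H e (SG [a, a])).E) : hH'.ends x ≠ s(midNode e a, midNode e a) := by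
  intro hx
  obtain ⟨i, rfl⟩ := exists_eq_inr_of_midNode_mem hH hH' (hx ▸ Sym2.mem_mk_left _ _)
  change Fin 2 at i
  rcases (show i = 0 ∨ i = 1 by omega) with rfl | rfl
  · rw [ends_inr_zero hH hH', Sym2.congr_left] at hx
    exact oldNode_ne_midNode e a hH _ hx
  · rw [ends_inr_one hH hH', Sym2.congr_right] at hx
    exact oldNode_ne_midNode e a hH _ hx

theorem ends_eq_iff_exists_halves (hH : IsBinary H) (hH' : IsBinary (replace H e (SG [a, a])))
    {p q : H.V} :
    hH.ends e = s(p, q) ↔ ∃ i j : Fin 2, i ≠ j ∧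
      hH'.ends (.inr i) = s(oldNode e a p, midNode e a) ∧
      hH'.ends (.inr j) = s(midNode e a, oldNode e a q) := by
  constructor
  · rw [IsBinary.ends, Sym2.eq_iff]
    rintro (⟨rfl, rfl⟩ | ⟨rfl, rfl⟩)
    · exact ⟨0, 1, by decide, ends_inr_zero hH hH', ends_inr_one hH hH'⟩
    · exact ⟨1, 0, by decide, (ends_inr_one hH hH').trans Sym2.eq_swap,
        (ends_inr_zero hH hH').trans Sym2.eq_swap⟩
  · rintro ⟨i, j, hij, hi, hj⟩
    show s(hH.src e, hH.tgt e) = s(p, q)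
    rcases (show i = 0 ∨ i = 1 by omega) with rfl | rfl <;>
      rcases (show j = 0 ∨ j = 1 by omega) with rfl | rfl <;>
      simp_all [ends_inr_zero hH hH', ends_inr_one hH hH', Ne.symm,
        (oldNode_injective e a hH).eq_iff, oldNode_ne_midNode e a hH]

theorem isPath_oldNode_comp_iff (hH : IsBinary H) (hH' : IsBinary (replace H e (SG [a, a])))
    {n : ℕ} {w : Fin (n + 1) → H.V} {y : Fin n → {y // y ≠ e}} :
    IsPath hH'.ends (oldNode e a ∘ w) (Sum.inl ∘ y) ↔ IsPath hH.ends w (Subtype.val ∘ y) :=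
  isPath_comp_iff (oldNode_injective e a hH) Subtype.val_injective Sum.inl_injective fun _ => rfl

theorem isCycle_oldNode_comp_iff (hH : IsBinary H) (hH' : IsBinary (replace H e (SG [a, a])))
    {n : ℕ} {w : Fin (n + 1) → H.V} {y : Fin (n + 1) → {y // y ≠ e}} :
    IsCycle hH'.ends (oldNode e a ∘ w) (Sum.inl ∘ y) ↔ IsCycle hH.ends w (Subtype.val ∘ y) :=
  isCycle_comp_iff (oldNode_injective e a hH) Subtype.val_injective Sum.inl_injective fun _ => rfl

theorem hasCycle_replace_of_isPath (hH : IsBinary H) (hH' : IsBinary (replace H e (SG [a, a])))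
    {n : ℕ} {v : Fin (n + 1) → H.V} {x : Fin n → H.E} (hp : IsPath hH.ends v x)
    (hx : e ∉ Set.range x) (he : hH.ends e = s(v (Fin.last n), v 0)) :
    HasCycle hH'.ends := by
  obtain ⟨i, j, hij, hi, hj⟩ := (ends_eq_iff_exists_halves hH hH').1 he
  let y : Fin n → {y // y ≠ e} := fun k => ⟨x k, fun h => hx ⟨k, h⟩⟩
  refine ⟨n + 1, _, _, isCycle_snoc_snoc_iff.2
    ⟨(isPath_oldNode_comp_iff hH hH' (y := y)).2 hp, ?_, ?_, ?_, hi, hj⟩⟩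
  · rintro ⟨k, hk⟩
    exact oldNode_ne_midNode e a hH _ hk
  · rintro ⟨k, ⟨⟩⟩
  · rintro (h | ⟨k, ⟨⟩⟩)
    exact hij (Sum.inr_injective h).symm

theorem hasCycle_of_isPath_replace (hH : IsBinary H) (hH' : IsBinary (replace H e (SG [a, a])))
    {n : ℕ} {w : Fin (n + 1) → H.V} {y : Fin n → (replace H e (SG [a, a])).E}
    {k₁ k₂ : (replace H e (SG [a, a])).E} (hp : IsPath hH'.ends (oldNode e a ∘ w) y)
    (hk : k₂ ∉ insert k₁ (Set.range y))
    (hk₁ : hH'.ends k₁ = s(oldNode e a (w (Fin.last n)), midNode e a))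
    (hk₂ : hH'.ends k₂ = s(midNode e a, oldNode e a (w 0))) :
    HasCycle hH.ends := by
  obtain ⟨i, rfl⟩ := exists_eq_inr_of_midNode_mem hH hH' (hk₁ ▸ Sym2.mem_mk_right _ _)
  obtain ⟨j, rfl⟩ := exists_eq_inr_of_midNode_mem hH hH' (hk₂ ▸ Sym2.mem_mk_left _ _)
  have he : hH.ends e = s(w (Fin.last n), w 0) :=
    (ends_eq_iff_exists_halves hH hH').2 ⟨i, j, fun h => hk (h ▸ Set.mem_insert _ _), hk₁, hk₂⟩
  obtain ⟨y, rfl⟩ := exists_comp_inl hH hH' fun k => by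
    rw [hp.2.2 k]
    exact midNode_not_mem_map hH s(_, _)
  exact ⟨n, w, Fin.snoc (Subtype.val ∘ y) e,
    isCycle_snoc_iff.2 ⟨(isPath_oldNode_comp_iff hH hH').1 hp, fun ⟨k, hk⟩ => (y k).2 hk, he⟩⟩

theorem hasCycle_replace_iff (hH : IsBinary H) (hH' : IsBinary (replace H e (SG [a, a]))) :
    HasCycle hH.ends ↔ HasCycle hH'.ends := by
  constructor
  · rintro ⟨n, v, x, hc⟩
    by_cases hx : e ∈ Set.range x
    · obtain ⟨i, hi⟩ := hx
      obtain ⟨v, x, hc, -, hlast⟩ := hc.exists_rotate_last i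
      rw [← Fin.snoc_init_self x, hlast, hi, isCycle_snoc_iff] at hc
      exact hasCycle_replace_of_isPath hH hH' hc.1 hc.2.1 hc.2.2
    · exact ⟨n, _, _,
        (isCycle_oldNode_comp_iff hH hH' (y := fun k => ⟨x k, fun h => hx ⟨k, h⟩⟩)).2 hc⟩
  · rintro ⟨n, v, x, hc⟩
    by_cases hv : midNode e a ∈ Set.range v
    · obtain ⟨i, hi⟩ := hv
      obtain ⟨v, x, hc, hlast, -⟩ := hc.exists_rotate_last i
      cases n with
      | zero =>
        have hv : ∀ k, v k = midNode e a := fun k => by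
          rw [show k = Fin.last 0 from Fin.ext (by omega), hlast, hi]
        exact absurd (hc.2.2 0) (by rw [hv, hv]; exact ends_ne_midNode_midNode hH hH' _)
      | succ n =>
        rw [← Fin.snoc_init_self v, ← Fin.snoc_init_self x, ← Fin.snoc_init_self (Fin.init x),
          hlast, hi, isCycle_snoc_snoc_iff] at hc
        obtain ⟨hp, hmid, -, hk, hk₁, hk₂⟩ := hc
        obtain ⟨w, hw⟩ := exists_comp_oldNode hH hmid
        rw [← hw] at hp hk₁ hk₂
        exact hasCycle_of_isPath_replace hH hH' hp hk hk₁ hk₂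
    · obtain ⟨w, rfl⟩ := exists_comp_oldNode hH hv
      obtain ⟨y, rfl⟩ := exists_comp_inl hH hH' fun k => by
        rw [hc.2.2 k]
        exact midNode_not_mem_map hH s(_, _)
      exact ⟨n, w, _, (isCycle_oldNode_comp_iff hH hH').1 hc⟩

end Subdivision

/-- Replacing an `a`-labeled edge of an `a`-labeled hypergraph `H` by
`SG(aa)` (the production `π : a → SG(aa)`) preserves and reflects badness: `H` has a bad node
or an undirected cycle iff `H[e/SG(aa)]` does; equivalently, `H` is good iff `H[e/SG(aa)]`
is good. -/
theorem stmt_14 (C : Type) (tc : C → Finset ℕ) (a : C)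
    (hta : tc a = ({1, 2} : Finset ℕ))
    (H : Hypergraph C tc) (hH : ∀ e : H.E, H.lab e = a) (e : H.E) :
    (Bad H ↔ Bad (replace H e (SG [a, a]))) ∧
    (Good H ↔ Good (replace H e (SG [a, a]))) := by
  have hbin : IsBinary H := fun x => by simp [hH x, hta]
  have hbin' : IsBinary (replace H e (SG [a, a])) := hbin.replace_SG e a (by simp [hta])
  have hbad : Bad H ↔ Bad (replace H e (SG [a, a])) := by
    rw [Bad, Bad, hbin.hasUndirectedCycle_iff, hbin'.hasUndirectedCycle_iff]
    exact or_congr (exists_badNode_iff_replace hbin hbin') (hasCycle_replace_iff hbin hbin')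
  exact ⟨hbad, not_congr hbad⟩

end HRGPaper
end

section
/- Let H be a good a-labeled hypergraph (no bad nodes and no undirected cycles) that is ⇒_π-minimal, i.e. there is no hypergraph H₀ with H₀ ⇒_π H. Then every node of H is external (V_H = ran(ext_H)), and H is simple: it has no loops (edges e with att_H(e)(1) = att_H(e)(2)) and no two distinct edges attached to the same unordered pair of nodes. -/
namespace HRGPaper

universe u

variable {C : Type u} {tc : C → Finset ℕ}

section Aux

/-- Auxiliary: the contracted hypergraph: delete node `v` and edge `e_out`, with
attachments given by `f`. -/
def contractG (H : Hypergraph C tc) (v : H.V) (e_out : H.E) (f : H.E → ℕ → H.V)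
    (hf : ∀ e : H.E, e ≠ e_out → ∀ σ : ℕ, f e σ ≠ v)
    (hext : ∀ (σ : ℕ) (h : σ ∈ H.extType), H.ext σ h ≠ v) : Hypergraph C tc where
  V := {u : H.V // u ≠ v}
  E := {e : H.E // e ≠ e_out}
  finV := by haveI := H.finV; infer_instance
  finE := by haveI := H.finE; infer_instance
  lab := fun e => H.lab e.1
  att := fun e σ _ => ⟨f e.1 σ, hf e.1 e.2 σ⟩
  extType := H.extType
  ext := fun σ h => ⟨H.ext σ h, hext σ h⟩

open Classical in
/-- The attachment map of the contracted graph: the merged edge (represented by `e_in`)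
gets as target the target of `e_out`. -/
noncomputable def fmap (H : Hypergraph C tc) (m1 : ∀ e : H.E, 1 ∈ tc (H.lab e))
    (m2 : ∀ e : H.E, 2 ∈ tc (H.lab e)) (e_in e_out : H.E) : H.E → ℕ → H.V := fun e σ =>
  if σ = 1 then H.att e 1 (m1 e)
  else H.att (if e = e_in then e_out else e) 2 (m2 _)

lemma fmap_ne (H : Hypergraph C tc) (m1 : ∀ e : H.E, 1 ∈ tc (H.lab e))
    (m2 : ∀ e : H.E, 2 ∈ tc (H.lab e)) (v : H.V) (e_in e_out : H.E)
    (hA : H.att e_in 1 (m1 _) ≠ v) (hB : H.att e_out 2 (m2 _) ≠ v)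
    (hother : ∀ e : H.E, e ≠ e_out → e ≠ e_in →
      H.att e 1 (m1 e) ≠ v ∧ H.att e 2 (m2 e) ≠ v) :
    ∀ e : H.E, e ≠ e_out → ∀ σ : ℕ, fmap H m1 m2 e_in e_out e σ ≠ v := by
  intro e he σ
  unfold fmap
  by_cases h1 : σ = 1 <;> by_cases h2 : e = e_in <;> simp only [h1, h2, if_pos, if_neg,
    if_true, if_false, reduceIte]
  · exact h2 ▸ hA
  · exact (hother e he h2).1
  · exact hB
  · exact (hother e he h2).2

lemma contract_iso (C : Type) (tc : C → Finset ℕ) (a : C) (hta : tc a = ({1, 2} : Finset ℕ))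
    (H : Hypergraph C tc) (hH : ∀ e : H.E, H.lab e = a)
    (m1 : ∀ e : H.E, 1 ∈ tc (H.lab e)) (m2 : ∀ e : H.E, 2 ∈ tc (H.lab e))
    (v : H.V) (e_in e_out : H.E) (hne : e_in ≠ e_out)
    (hin : H.att e_in 2 (m2 _) = v)
    (hout : H.att e_out 1 (m1 _) = v)
    (hA : H.att e_in 1 (m1 _) ≠ v) (hB : H.att e_out 2 (m2 _) ≠ v)
    (hother : ∀ e : H.E, e ≠ e_out → e ≠ e_in →
      H.att e 1 (m1 e) ≠ v ∧ H.att e 2 (m2 e) ≠ v)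
    (hnx : ∀ (σ : ℕ) (h : σ ∈ H.extType), H.ext σ h ≠ v) :
    ∃ (H₀ : Hypergraph C tc) (e : H₀.E),
      (∀ e' : H₀.E, H₀.lab e' = a) ∧ IsIso (replace H₀ e (SG [a, a])) H := by
  classical
  have hfne := fmap_ne H m1 m2 v e_in e_out hA hB hother
  have mema : ∀ σ : ℕ, σ ∈ tc a → σ = 1 ∨ σ = 2 := by
    intro σ h
    rw [hta] at h
    simpa using h
  have mem12 : ∀ (e : H.E) (σ : ℕ), σ ∈ tc (H.lab e) → σ = 1 ∨ σ = 2 := by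
    intro e σ h
    rw [hH e, hta] at h
    simpa using h
  let H₀ : Hypergraph C tc := contractG H v e_out (fmap H m1 m2 e_in e_out) hfne hnx
  let eK : H₀.E := ⟨e_in, hne⟩
  let K : Hypergraph C tc := SG [a, a]
  have memK1 : (1 : ℕ) ∈ K.extType := by
    show (1 : ℕ) ∈ ({1, 2} : Finset ℕ); simp
  have memK2 : (2 : ℕ) ∈ K.extType := by
    show (2 : ℕ) ∈ ({1, 2} : Finset ℕ); simp
  -- the vertex map
  let φ : H₀.V ⊕ K.V → H.V := Sum.elim (fun u => u.1)
    (fun i : Fin 3 => if i.1 = 0 then H.att e_in 1 (m1 e_in)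
      else if i.1 = 1 then v else H.att e_out 2 (m2 e_out))
  have hsound : ∀ x y, glueRel H₀ eK K x y → φ x = φ y := by
    rintro _ _ ⟨σ, h, h', rfl, rfl⟩
    rcases mem12 e_in σ h with rfl | rfl
    · rfl
    · show fmap H m1 m2 e_in e_out e_in 2 = H.att e_out 2 (m2 e_out)
      simp [fmap]
  let Φ : Quot (glueRel H₀ eK K) → H.V := Quot.lift φ hsound
  let ψ : H.V → Quot (glueRel H₀ eK K) := fun u =>
    if h : u = v then Quot.mk _ (Sum.inr (⟨1, by omega⟩ : Fin 3))
    else Quot.mk _ (Sum.inl ⟨u, h⟩)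
  have hψ : ∀ (u : H.V) (h : u ≠ v),
      ψ u = Quot.mk (glueRel H₀ eK K) (Sum.inl ⟨u, h⟩) := fun u h => dif_neg h
  have hψv : ψ v = Quot.mk (glueRel H₀ eK K) (Sum.inr (⟨1, by omega⟩ : Fin 3)) :=
    dif_pos rfl
  have hfm2 : fmap H m1 m2 e_in e_out e_in 2 = H.att e_out 2 (m2 e_out) := by
    simp [fmap]
  have q1 : Quot.mk (glueRel H₀ eK K) (Sum.inl (H₀.att eK 1 (m1 e_in)))
      = Quot.mk _ (Sum.inr (K.ext 1 memK1)) :=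
    Quot.sound ⟨1, m1 e_in, memK1, rfl, rfl⟩
  have q2 : Quot.mk (glueRel H₀ eK K) (Sum.inl (H₀.att eK 2 (m2 e_in)))
      = Quot.mk _ (Sum.inr (K.ext 2 memK2)) :=
    Quot.sound ⟨2, m2 e_in, memK2, rfl, rfl⟩
  have vleft : ∀ x, ψ (Φ x) = x := by
    apply Quot.ind
    rintro (u | ⟨i, hi⟩)
    · exact hψ u.1 u.2
    · have hi' : i < 3 := by simpa using hi
      interval_cases i
      · exact (hψ _ hA).trans q1
      · exact hψv
      · refine ((hψ _ hB).trans ?_).trans q2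
        exact congrArg (Quot.mk _) (congrArg Sum.inl (Subtype.ext hfm2.symm))
  have vright : ∀ u, Φ (ψ u) = u := by
    intro u
    by_cases h : u = v
    · subst h; rw [hψv]; try rfl
    · rw [hψ u h]
      try rfl
  -- the edge map
  let eF : ({e' : H₀.E // e' ≠ eK} ⊕ K.E) → H.E :=
    Sum.elim (fun e' => e'.1.1) (fun i : Fin 2 => if i.1 = 0 then e_in else e_out)
  let eG : H.E → ({e' : H₀.E // e' ≠ eK} ⊕ K.E) := fun e =>
    if h1 : e = e_in then Sum.inr ⟨0, by norm_num⟩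
    else if h2 : e = e_out then Sum.inr ⟨1, by norm_num⟩
    else Sum.inl ⟨⟨e, h2⟩, fun hq => h1 (congrArg Subtype.val hq)⟩
  have hgin : eG e_in = Sum.inr ⟨0, by norm_num⟩ := dif_pos rfl
  have hgout : eG e_out = Sum.inr ⟨1, by norm_num⟩ :=
    (dif_neg (fun h => hne h.symm)).trans (dif_pos rfl)
  have hgelse : ∀ (e : H.E) (h1 : e ≠ e_in) (h2 : e ≠ e_out),
      eG e = Sum.inl ⟨⟨e, h2⟩, fun hq => h1 (congrArg Subtype.val hq)⟩ :=
    fun e h1 h2 => (dif_neg h1).trans (dif_neg h2)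
  have eLeft : ∀ x, eG (eF x) = x := by
    rintro (⟨⟨e', he1⟩, he2⟩ | ⟨i, hi⟩)
    · have h1 : e' ≠ e_in := fun h => he2 (Subtype.ext h)
      exact hgelse e' h1 he1
    · have hi' : i < 2 := by simpa using hi
      interval_cases i
      · exact hgin
      · exact hgout
  have eRight : ∀ e, eF (eG e) = e := by
    intro e
    by_cases h1 : e = e_in
    · subst h1; rw [hgin]; try rfl
    · by_cases h2 : e = e_out
      · subst h2; rw [hgout]; try rfl
      · rw [hgelse e h1 h2]; try rfl
  refine ⟨H₀, eK, fun e' => hH e'.1, ⟨⟨⟨Φ, ψ, vleft, vright⟩, ⟨eF, eG, eLeft, eRight⟩,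
    ?_, ?_, rfl, ?_⟩⟩⟩
  · -- lab_eq
    rintro (e' | ⟨i, hi⟩)
    · rfl
    · have hi' : i < 2 := by simpa using hi
      interval_cases i
      · exact hH e_in
      · exact hH e_out
  · -- att_eq
    rintro (e' | ⟨i, hi⟩) σ h h'
    · have hni : e'.1.1 ≠ e_in := fun hh => e'.2 (Subtype.ext hh)
      show H.att e'.1.1 σ h' = fmap H m1 m2 e_in e_out e'.1.1 σ
      rcases mem12 e'.1.1 σ h with rfl | rfl
      · simp [fmap]
      · simp [fmap, hni]
    · have hi' : i < 2 := by simpa using hi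
      interval_cases i <;> rcases mema σ h with rfl | rfl
      · rfl
      · exact hin
      · exact hout
      · rfl
  · -- ext_eq
    intro σ h h'
    rfl

end Aux

/-- A good `a`-labeled hypergraph `H` that is `⇒_π`-minimal (no `a`-labeled
`H₀` satisfies `H₀ ⇒_π H`, up to isomorphism) has only external nodes and is simple: it has no
loops and no two distinct edges attached to the same unordered pair of nodes. -/
theorem stmt_15 (C : Type) (tc : C → Finset ℕ) (a : C)
    (hta : tc a = ({1, 2} : Finset ℕ))
    (H : Hypergraph C tc) (hH : ∀ e : H.E, H.lab e = a)
    (hgood : Good H)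
    (hmin : ¬ ∃ (H₀ : Hypergraph C tc) (e : H₀.E),
        (∀ e' : H₀.E, H₀.lab e' = a) ∧ IsIso (replace H₀ e (SG [a, a])) H) :
    (∀ v : H.V, IsExternal H v) ∧
    (∀ (e : H.E) (h₁ : 1 ∈ tc (H.lab e)) (h₂ : 2 ∈ tc (H.lab e)),
        H.att e 1 h₁ ≠ H.att e 2 h₂) ∧
    (∀ e e' : H.E, e ≠ e' →
      ∀ (h₁ : 1 ∈ tc (H.lab e)) (h₂ : 2 ∈ tc (H.lab e))
        (h₁' : 1 ∈ tc (H.lab e')) (h₂' : 2 ∈ tc (H.lab e')),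
        ({H.att e 1 h₁, H.att e 2 h₂} : Set H.V) ≠ {H.att e' 1 h₁', H.att e' 2 h₂'}) := by
  classical
  have m1 : ∀ e : H.E, 1 ∈ tc (H.lab e) := by intro e; rw [hH e, hta]; simp
  have m2 : ∀ e : H.E, 2 ∈ tc (H.lab e) := by intro e; rw [hH e, hta]; simp
  have hnb : ∀ v : H.V, ¬ BadNode H v := fun v hv => hgood (Or.inl ⟨v, hv⟩)
  have hnc : ¬ HasUndirectedCycle H := fun hc => hgood (Or.inr hc)
  have noloop : ∀ (e : H.E) (h₁ : 1 ∈ tc (H.lab e)) (h₂ : 2 ∈ tc (H.lab e)),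
      H.att e 1 h₁ ≠ H.att e 2 h₂ := by
    intro e h₁ h₂ heq
    apply hnc
    refine ⟨1, one_pos, fun _ => H.att e 1 h₁, fun _ => e, ?_, ?_, ?_⟩
    · intro i j _; exact Subsingleton.elim i j
    · intro i j _; exact Subsingleton.elim i j
    · intro i
      refine ⟨h₁, h₂, ?_⟩
      rw [← heq]
  have nopar : ∀ e e' : H.E, e ≠ e' →
      ∀ (h₁ : 1 ∈ tc (H.lab e)) (h₂ : 2 ∈ tc (H.lab e))
        (h₁' : 1 ∈ tc (H.lab e')) (h₂' : 2 ∈ tc (H.lab e')),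
        ({H.att e 1 h₁, H.att e 2 h₂} : Set H.V) ≠ {H.att e' 1 h₁', H.att e' 2 h₂'} := by
    intro e e' hee h₁ h₂ h₁' h₂' heq
    apply hnc
    have hne12 : H.att e 1 h₁ ≠ H.att e 2 h₂ := noloop e h₁ h₂
    refine ⟨2, two_pos, ![H.att e 1 h₁, H.att e 2 h₂], ![e, e'], ?_, ?_, ?_⟩
    · intro i j hij
      fin_cases i <;> fin_cases j <;>
        first
          | rfl
          | exact absurd hij hne12
          | exact absurd hij.symm hne12
    · intro i j hij
      fin_cases i <;> fin_cases j <;>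
        first
          | rfl
          | exact absurd hij hee
          | exact absurd hij.symm hee
    · intro i
      fin_cases i
      · exact ⟨h₁, h₂, rfl⟩
      · refine ⟨h₁', h₂', ?_⟩
        show ({H.att e' 1 h₁', H.att e' 2 h₂'} : Set H.V) = {H.att e 2 h₂, H.att e 1 h₁}
        rw [← heq]
        exact Set.pair_comm _ _
  refine ⟨?_, noloop, nopar⟩
  intro v
  by_contra hnx
  have hin1 : inDeg H v = 1 := by
    by_contra hcon
    exact hnb v ⟨hnx, Or.inl hcon⟩
  have hout1 : outDeg H v = 1 := by
    by_contra hcon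
    exact hnb v ⟨hnx, Or.inr hcon⟩
  rw [inDeg, Nat.card_eq_one_iff_unique] at hin1
  rw [outDeg, Nat.card_eq_one_iff_unique] at hout1
  obtain ⟨hsubI, ⟨⟨e_in, hI0, hI⟩⟩⟩ := hin1
  obtain ⟨hsubO, ⟨⟨e_out, hO0, hO⟩⟩⟩ := hout1
  have hin_eq : H.att e_in 2 (m2 e_in) = v := hI
  have hout_eq : H.att e_out 1 (m1 e_out) = v := hO
  have hin_uniq : ∀ (e : H.E) (h : 2 ∈ tc (H.lab e)), H.att e 2 h = v → e = e_in := by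
    intro e h he
    have := @Subsingleton.elim _ hsubI ⟨e, h, he⟩ ⟨e_in, hI0, hI⟩
    exact congrArg Subtype.val this
  have hout_uniq : ∀ (e : H.E) (h : 1 ∈ tc (H.lab e)), H.att e 1 h = v → e = e_out := by
    intro e h he
    have := @Subsingleton.elim _ hsubO ⟨e, h, he⟩ ⟨e_out, hO0, hO⟩
    exact congrArg Subtype.val this
  have hne : e_in ≠ e_out := by
    intro h
    subst h
    exact noloop e_in (m1 e_in) (m2 e_in) (hout_eq.trans hin_eq.symm)
  have hA : H.att e_in 1 (m1 e_in) ≠ v :=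
    fun h => noloop e_in (m1 e_in) (m2 e_in) (h.trans hin_eq.symm)
  have hB : H.att e_out 2 (m2 e_out) ≠ v :=
    fun h => hne (hin_uniq e_out (m2 e_out) h).symm
  have hother : ∀ e : H.E, e ≠ e_out → e ≠ e_in →
      H.att e 1 (m1 e) ≠ v ∧ H.att e 2 (m2 e) ≠ v :=
    fun e h1 h2 => ⟨fun hh => h1 (hout_uniq e (m1 e) hh), fun hh => h2 (hin_uniq e (m2 e) hh)⟩
  have hnx' : ∀ (σ : ℕ) (h : σ ∈ H.extType), H.ext σ h ≠ v :=
    fun σ h hh => hnx ⟨σ, h, hh⟩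
  exact hmin (contract_iso C tc a hta H hH m1 m2 v e_in e_out hne hin_eq hout_eq
    hA hB hother hnx')

end HRGPaper
end
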